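/- arXiv:2210.00307 — 9 statements merged into one kernel-verified Lean document; each statement's English description precedes it below -/
import Mathlib

section
/- Let X be a Banach space, Ω a nonempty closed subset of X, and γ ∈ (0, 1). Then for every x ∉ Ω there exists z ∈ Ω such that γ‖x − z‖ < min{ d(x, Ω), d(x − z, T^B(Ω, z)) }. -/
/-!
Apply Ekeland's variational principle to `u ↦ ‖x - u‖` on the complete metric space `Ω`, with
slope `σ = (1 - γ) / 2`, starting from a point `u₀ ∈ Ω` with `γ‖x - u₀‖ < d(x, Ω)`. The resulting
`z` is no farther from `x` than `u₀`, and `‖x - z‖ ≤ ‖x - u‖ + σ‖u - z‖` for all `u ∈ Ω`. Along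
`u = z + t v` with `v` tangent this gives, by convexity of the norm, `‖w‖ ≤ ‖w - v‖ + σ‖v‖` for
`w = x - z`, hence `(1 - σ)‖w‖ ≤ (1 + σ)‖w - v‖`; and `(1 - σ) / (1 + σ) > γ`.
-/

open Filter Metric Set Pointwise Topology
open scoped ENNReal

noncomputable section

/-- The Bouligand (contingent) tangent cone of `A` at `u`. -/
def bouligand {X : Type*} [NormedAddCommGroup X] [NormedSpace ℝ X] (A : Set X) (u : X) :
    Set X :=
  {v | ∃ (vs : ℕ → X) (ts : ℕ → ℝ),
    Tendsto vs atTop (𝓝 v) ∧ Tendsto ts atTop (𝓝 0) ∧ (∀ n, 0 < ts n) ∧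
    ∀ n, u + ts n • vs n ∈ A}

/-- The Shapiro first order contact property of `A` at `a`. -/
def shapiro {X : Type*} [NormedAddCommGroup X] [NormedSpace ℝ X] (A : Set X) (a : X) : Prop :=
  ∀ ε > 0, ∃ δ > 0, ∀ x ∈ A ∩ ball a δ, ∀ u ∈ A ∩ ball a δ,
    infDist (x - u) (bouligand A u) ≤ ε * ‖x - u‖

/-- The lower Hadamard directional derivative of `φ` at `x` in direction `h`. -/
def hadamardDeriv {X : Type*} [NormedAddCommGroup X] [NormedSpace ℝ X]
    (φ : X → EReal) (x h : X) : EReal :=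
  liminf (fun p : ℝ × X => (((1 : ℝ) / p.1 : ℝ) : EReal) * (φ (x + p.1 • p.2) - φ x))
    ((𝓝[>] (0 : ℝ)) ×ˢ 𝓝 h)

/-- The epigraph of an `EReal`-valued function, as a subset of `X × ℝ`. -/
def epigraph {X : Type*} (φ : X → EReal) : Set (X × ℝ) := {p | φ p.1 ≤ (p.2 : EReal)}

/-- The Hausdorff-Pompeiu excess of `C` beyond `D`. -/
def excess {X : Type*} [PseudoEMetricSpace X] (C D : Set X) : ℝ≥0∞ :=
  ⨆ c ∈ C, EMetric.infEdist c D

/-- Metric regularity of `φ` around `xbar` (for `φ xbar`). -/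
def metReg {X Y : Type*} [NormedAddCommGroup X] [NormedAddCommGroup Y]
    (φ : X → Y) (xbar : X) : Prop :=
  ∃ κ > (0 : ℝ), ∃ U ∈ 𝓝 xbar, ∃ V ∈ 𝓝 (φ xbar), ∀ x ∈ U, ∀ y ∈ V,
    EMetric.infEdist x (φ ⁻¹' {y}) ≤ ENNReal.ofReal (κ * ‖φ x - y‖)

section Ekeland

variable {X : Type*} [MetricSpace X] {f : X → ℝ} {σ : ℝ}

def ekelandSet (f : X → ℝ) (σ : ℝ) (z : X) : Set X :=
  {u | f u + σ * dist u z ≤ f z}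

lemma self_mem_ekelandSet (z : X) : z ∈ ekelandSet f σ z := by
  simp [ekelandSet]

lemma ekelandSet_trans (hσ : 0 ≤ σ) {z u w : X} (hu : u ∈ ekelandSet f σ z)
    (hw : w ∈ ekelandSet f σ u) : w ∈ ekelandSet f σ z := by
  have := mul_le_mul_of_nonneg_left (dist_triangle w u z) hσ
  simp only [ekelandSet, mem_ofPred_eq] at *
  linarith

lemma isClosed_ekelandSet (hf : LowerSemicontinuous f) (z : X) :
    IsClosed (ekelandSet f σ z) :=
  (hf.add (continuous_const.mul (continuous_id.dist continuous_const)).lowerSemicontinuous)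
    |>.isClosed_preimage (f z)

lemma exists_mem_ekelandSet_forall_le_add (hf : BddBelow (range f)) (z : X) {δ : ℝ}
    (hδ : 0 < δ) : ∃ u ∈ ekelandSet f σ z, ∀ w ∈ ekelandSet f σ z, f u ≤ f w + δ := by
  have hne : (f '' ekelandSet f σ z).Nonempty := ⟨f z, z, self_mem_ekelandSet z, rfl⟩
  obtain ⟨_, ⟨u, hu, rfl⟩, hlt⟩ := exists_lt_of_csInf_lt hne (lt_add_of_pos_right _ hδ)
  refine ⟨u, hu, fun w hw => ?_⟩
  have := csInf_le (hf.mono (image_subset_range _ _)) (mem_image_of_mem f hw)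
  linarith

lemma dist_le_of_mem_ekelandSet_of_forall_le_add (hσ : 0 ≤ σ) {z u w : X} {δ : ℝ}
    (hu : u ∈ ekelandSet f σ z) (hmin : ∀ w ∈ ekelandSet f σ z, f u ≤ f w + δ)
    (hw : w ∈ ekelandSet f σ u) : σ * dist w u ≤ δ := by
  have := hmin w (ekelandSet_trans hσ hu hw)
  simp only [ekelandSet, mem_ofPred_eq] at hw
  linarith

theorem ekeland_variational_principle [CompleteSpace X] (hf : LowerSemicontinuous f)
    (hbdd : BddBelow (range f)) (hσ : 0 < σ) (x₀ : X) :
    ∃ z, f z + σ * dist z x₀ ≤ f x₀ ∧ ∀ u ≠ z, f z < f u + σ * dist u z := by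
  choose F hFmem hFmin using fun (n : ℕ) (z : X) =>
    exists_mem_ekelandSet_forall_le_add (σ := σ) hbdd z (by positivity : (0 : ℝ) < (1 / 2) ^ n)
  -- each `zs (n + 1)` is a `2⁻ⁿ`-minimiser of `f` on `ekelandSet f σ (zs n)`, so the nested
  -- sets `ekelandSet f σ (zs n)` shrink to a single point
  let zs : ℕ → X := fun n => Nat.rec x₀ F n
  have hchain : ∀ n m, n ≤ m → zs m ∈ ekelandSet f σ (zs n) := by
    intro n m hnm
    induction m, hnm using Nat.le_induction with
    | base => exact self_mem_ekelandSet _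
    | succ m _ ih => exact ekelandSet_trans hσ.le ih (hFmem m (zs m))
  have hsmall : ∀ n, ∀ w ∈ ekelandSet f σ (zs (n + 1)), dist w (zs (n + 1)) ≤ (1 / 2) ^ n / σ :=
    fun n w hw => (le_div_iff₀' hσ).2 <|
      dist_le_of_mem_ekelandSet_of_forall_le_add hσ.le (hFmem n _) (hFmin n _) hw
  have hgeom : Tendsto (fun n : ℕ => (1 / 2 : ℝ) ^ n / σ) atTop (𝓝 0) := by
    simpa using (tendsto_pow_atTop_nhds_zero_of_lt_one (by norm_num : (0 : ℝ) ≤ 1 / 2)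
      (by norm_num)).div_const σ
  have hcauchy : CauchySeq fun n => zs (n + 1) := by
    refine cauchySeq_of_le_tendsto_0 (fun N => 2 * ((1 / 2) ^ N / σ)) (fun n m N hn hm => ?_)
      (by simpa using hgeom.const_mul 2)
    have hn' := hsmall N _ (hchain (N + 1) (n + 1) (by omega))
    have hm' := hsmall N _ (hchain (N + 1) (m + 1) (by omega))
    linarith [dist_triangle_right (zs (n + 1)) (zs (m + 1)) (zs (N + 1))]
  obtain ⟨z, hz⟩ := cauchySeq_tendsto_of_complete hcauchy
  have hzmem : ∀ n, z ∈ ekelandSet f σ (zs n) := fun n =>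
    (isClosed_ekelandSet hf _).mem_of_tendsto hz
      (eventually_atTop.2 ⟨n, fun m hm => hchain n (m + 1) (by omega)⟩)
  refine ⟨z, hzmem 0, fun u hne => ?_⟩
  by_contra! hle
  have hu : ∀ n, u ∈ ekelandSet f σ (zs n) := fun n => ekelandSet_trans hσ.le (hzmem n) hle
  have hu_lim : Tendsto (fun n => zs (n + 1)) atTop (𝓝 u) :=
    tendsto_iff_dist_tendsto_zero.2 <| squeeze_zero (fun _ => dist_nonneg)
      (fun n => by rw [dist_comm]; exact hsmall n u (hu (n + 1))) hgeom
  exact hne (tendsto_nhds_unique hu_lim hz)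

end Ekeland

section Tangent

variable {X : Type*} [NormedAddCommGroup X] [NormedSpace ℝ X]

lemma zero_mem_bouligand {A : Set X} {u : X} (hu : u ∈ A) : (0 : X) ∈ bouligand A u :=
  ⟨fun _ => 0, fun n => 1 / (n + 1), tendsto_const_nhds, tendsto_one_div_add_atTop_nhds_zero_nat,
    fun _ => by positivity, fun _ => by simpa using hu⟩

lemma norm_le_norm_sub_add_of_smul {w v : X} {t σ : ℝ} (ht0 : 0 < t) (ht1 : t ≤ 1)
    (h : ‖w‖ ≤ ‖w - t • v‖ + σ * ‖t • v‖) : ‖w‖ ≤ ‖w - v‖ + σ * ‖v‖ := by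
  have hconv : ‖w - t • v‖ ≤ (1 - t) * ‖w‖ + t * ‖w - v‖ :=
    calc ‖w - t • v‖ = ‖(1 - t) • w + t • (w - v)‖ := by congr 1; module
      _ ≤ ‖(1 - t) • w‖ + ‖t • (w - v)‖ := norm_add_le _ _
      _ = (1 - t) * ‖w‖ + t * ‖w - v‖ := by
        rw [norm_smul, norm_smul, Real.norm_of_nonneg (by linarith), Real.norm_of_nonneg ht0.le]
  rw [norm_smul, Real.norm_of_nonneg ht0.le] at h
  have : t * ‖w‖ ≤ t * (‖w - v‖ + σ * ‖v‖) := by linarith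
  exact le_of_mul_le_mul_left this ht0

lemma norm_le_norm_sub_add_of_mem_bouligand {Ω : Set X} {x z : X} {σ : ℝ}
    (hmin : ∀ u ∈ Ω, ‖x - z‖ ≤ ‖x - u‖ + σ * ‖u - z‖) {v : X} (hv : v ∈ bouligand Ω z) :
    ‖x - z‖ ≤ ‖x - z - v‖ + σ * ‖v‖ := by
  obtain ⟨vs, ts, hvs, hts, htpos, hmem⟩ := hv
  have hev : ∀ᶠ n in atTop, ‖x - z‖ ≤ ‖x - z - vs n‖ + σ * ‖vs n‖ := by
    filter_upwards [hts.eventually (eventually_le_nhds zero_lt_one)] with n htn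
    refine norm_le_norm_sub_add_of_smul (htpos n) htn ?_
    simpa only [sub_add_eq_sub_sub, add_sub_cancel_left] using hmin _ (hmem n)
  exact ge_of_tendsto ((tendsto_const_nhds.sub hvs).norm.add (hvs.norm.const_mul σ)) hev

lemma mul_norm_le_infDist_bouligand {Ω : Set X} {x z : X} {σ : ℝ} (hσ : 0 ≤ σ) (hz : z ∈ Ω)
    (hmin : ∀ u ∈ Ω, ‖x - z‖ ≤ ‖x - u‖ + σ * ‖u - z‖) :
    (1 - σ) / (1 + σ) * ‖x - z‖ ≤ infDist (x - z) (bouligand Ω z) := by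
  refine (le_infDist ⟨0, zero_mem_bouligand hz⟩).2 fun v hv => ?_
  have htan := norm_le_norm_sub_add_of_mem_bouligand hmin hv
  have hv_le := norm_le_norm_add_norm_sub (x - z) v
  rw [dist_eq_norm, div_mul_eq_mul_div, div_le_iff₀ (by linarith)]
  nlinarith

end Tangent

theorem exists_point_tangent_dist {X : Type*} [NormedAddCommGroup X] [NormedSpace ℝ X]
    [CompleteSpace X] (Ω : Set X) (hne : Ω.Nonempty) (hcl : IsClosed Ω)
    (γ : ℝ) (hγ : γ ∈ Set.Ioo (0 : ℝ) 1) (x : X) (hx : x ∉ Ω) :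
    ∃ z ∈ Ω, γ * ‖x - z‖ < min (infDist x Ω) (infDist (x - z) (bouligand Ω z)) := by
  obtain ⟨hγ0, hγ1⟩ := hγ
  have hd : 0 < infDist x Ω := (hcl.notMem_iff_infDist_pos hne).1 hx
  obtain ⟨u₀, hu₀, hxu₀⟩ := (infDist_lt_iff hne).1 <|
    (lt_div_iff₀ hγ0).2 (mul_lt_of_lt_one_right hd hγ1)
  have : CompleteSpace Ω := hcl.isComplete.completeSpace_coe
  obtain ⟨⟨z, hz⟩, hzu₀, hzmin⟩ := ekeland_variational_principle (σ := (1 - γ) / 2)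
    (f := fun u : Ω => ‖x - u‖) (continuous_const.sub continuous_subtype_val).norm.lowerSemicontinuous
    ⟨0, by rintro _ ⟨u, rfl⟩; positivity⟩ (by linarith) ⟨u₀, hu₀⟩
  have hmin : ∀ u ∈ Ω, ‖x - z‖ ≤ ‖x - u‖ + (1 - γ) / 2 * ‖u - z‖ := by
    intro u hu
    rcases eq_or_ne u z with rfl | huz
    · simp
    · simpa [Subtype.dist_eq, dist_eq_norm] using (hzmin ⟨u, hu⟩ (by simpa using huz)).le
  have hxz : 0 < ‖x - z‖ := norm_pos_iff.2 (sub_ne_zero.2 fun h => hx (h ▸ hz))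
  refine ⟨z, hz, lt_min ?_ ?_⟩
  · calc γ * ‖x - z‖ ≤ γ * ‖x - u₀‖ := by
          gcongr
          exact le_of_add_le_of_nonneg_left hzu₀ (by positivity)
      _ < infDist x Ω := by rwa [dist_eq_norm, lt_div_iff₀' hγ0] at hxu₀
  · calc γ * ‖x - z‖ < (1 - (1 - γ) / 2) / (1 + (1 - γ) / 2) * ‖x - z‖ := by
          gcongr
          rw [lt_div_iff₀ (by linarith)]
          nlinarith
      _ ≤ _ := mul_norm_le_infDist_bouligand (by linarith) hz hmin
end
end

section
/- Let φ : X → Y be a mapping between Banach spaces and x̄ ∈ X. Suppose φ is Fréchet differentiable at x̄ and there exist κ, r > 0 such that d(x̄, φ⁻¹(y)) ≤ κ‖φ(x̄) − y‖ for all y ∈ Y with ‖y − φ(x̄)‖ < r. Then the range ∇φ(x̄)(X) of the Fréchet derivative ∇φ(x̄) is a closed linear subspace of Y. -/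
open Filter Metric Set Pointwise Topology
open scoped ENNReal

noncomputable section

/-!
The metric estimate says that `φ` is open at a linear rate at `xbar`: every `y` near `φ xbar` is
`φ x` for some `x` with `‖x - xbar‖ ≤ (κ + 1) ‖y - φ xbar‖`. Applying this to `y = φ xbar + t • v`
for small `t > 0` and rescaling by `t⁻¹`, differentiability turns it into approximate preimages
under `φ'`: every `v` is within `‖v‖ / 2` of `φ' u` for some `u` with `‖u‖ ≤ (κ + 1) ‖v‖`.
Correcting the error iteratively, as in the proof of the open mapping theorem, gives a convergent
series in the complete space `X` whose image is `v`. So `φ'` is onto and its range is closed.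
-/

theorem ContinuousLinearMap.surjective_of_exists_approx_preimage {R E F : Type*} [Semiring R]
    [NormedAddCommGroup E] [Module R E] [CompleteSpace E] [NormedAddCommGroup F] [Module R F]
    (f : E →L[R] F) {C q : ℝ} (hC : 0 ≤ C) (hq₀ : 0 ≤ q) (hq₁ : q < 1)
    (happrox : ∀ y, ∃ x, ‖x‖ ≤ C * ‖y‖ ∧ ‖f x - y‖ ≤ q * ‖y‖) :
    Function.Surjective f := by
  intro y
  choose g hg_norm hg_approx using happrox
  -- `w n` is what is left of `y` after `n` corrections; `g (w n)` is the `n`-th correction.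
  set w : ℕ → F := fun n => (fun z => z - f (g z))^[n] y
  have hw_succ (n : ℕ) : w (n + 1) = w n - f (g (w n)) :=
    Function.iterate_succ_apply' _ n y
  have hw_le (n : ℕ) : ‖w n‖ ≤ q ^ n * ‖y‖ := by
    induction n with
    | zero => simp [w]
    | succ n ih =>
      calc ‖w (n + 1)‖ = ‖f (g (w n)) - w n‖ := by rw [hw_succ, norm_sub_rev]
        _ ≤ q * ‖w n‖ := hg_approx _
        _ ≤ q * (q ^ n * ‖y‖) := by gcongr
        _ = q ^ (n + 1) * ‖y‖ := by ring
  have hg_le (n : ℕ) : ‖g (w n)‖ ≤ C * ‖y‖ * q ^ n :=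
    calc ‖g (w n)‖ ≤ C * ‖w n‖ := hg_norm _
      _ ≤ C * (q ^ n * ‖y‖) := by gcongr; exact hw_le n
      _ = C * ‖y‖ * q ^ n := by ring
  have hsum : Summable (fun n => g (w n)) :=
    .of_norm_bounded ((summable_geometric_of_lt_one hq₀ hq₁).mul_left _) hg_le
  have hpartial (n : ℕ) : f (∑ i ∈ Finset.range n, g (w i)) = y - w n := by
    induction n with
    | zero => simp [w]
    | succ n ih => rw [Finset.sum_range_succ, map_add, ih, hw_succ]; abel
  have hw_lim : Tendsto w atTop (𝓝 0) := by
    refine squeeze_zero_norm hw_le ?_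
    simpa using (tendsto_pow_atTop_nhds_zero_of_lt_one hq₀ hq₁).mul_const ‖y‖
  refine ⟨∑' n, g (w n), tendsto_nhds_unique (f.continuous.tendsto _ |>.comp
    hsum.hasSum.tendsto_sum_nat) ?_⟩
  simpa [Function.comp_def, hpartial] using tendsto_const_nhds (x := y) |>.sub hw_lim

theorem HasFDerivAt.exists_approx_preimage {E F : Type*} [NormedAddCommGroup E]
    [NormedSpace ℝ E] [NormedAddCommGroup F] [NormedSpace ℝ F] {φ : E → F} {φ' : E →L[ℝ] F}
    {x₀ : E} (hφ : HasFDerivAt φ φ' x₀) {C : ℝ} (hC : 0 < C)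
    (hopen : ∀ᶠ y in 𝓝 (φ x₀), ∃ x, φ x = y ∧ ‖x - x₀‖ ≤ C * ‖y - φ x₀‖)
    {ε : ℝ} (hε : 0 < ε) (v : F) : ∃ u, ‖u‖ ≤ C * ‖v‖ ∧ ‖φ' u - v‖ ≤ ε * ‖v‖ := by
  obtain ⟨ρ, hρ, hlin⟩ := Metric.eventually_nhds_iff.mp (hφ.isLittleO.def (div_pos hε hC))
  have hline : Tendsto (fun t : ℝ => φ x₀ + t • v) (𝓝[>] 0) (𝓝 (φ x₀)) := by
    refine tendsto_nhdsWithin_of_tendsto_nhds ?_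
    exact (by fun_prop : Continuous fun t : ℝ => φ x₀ + t • v).tendsto' 0 _ (by simp)
  have hsmall : ∀ᶠ t in 𝓝[>] (0 : ℝ), C * (t * ‖v‖) < ρ := by
    refine Tendsto.eventually_lt_const hρ (tendsto_nhdsWithin_of_tendsto_nhds ?_)
    exact (by fun_prop : Continuous fun t : ℝ => C * (t * ‖v‖)).tendsto' 0 _ (by simp)
  obtain ⟨t, ht, ⟨x, hx, hxx₀⟩, htρ⟩ :=
    (eventually_mem_nhdsWithin.and ((hline.eventually hopen).and hsmall)).exists
  rw [mem_Ioi] at ht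
  have hstep : φ x - φ x₀ = t • v := by rw [hx]; abel
  rw [add_sub_cancel_left, norm_smul, Real.norm_of_nonneg ht.le] at hxx₀
  have hrem := hlin (y := x) (by rw [dist_eq_norm]; linarith)
  rw [hstep] at hrem
  refine ⟨t⁻¹ • (x - x₀), ?_, ?_⟩
  · rw [norm_smul, norm_inv, Real.norm_of_nonneg ht.le, inv_mul_le_iff₀ ht]
    linarith
  · have hscale : φ' (t⁻¹ • (x - x₀)) - v = t⁻¹ • -(t • v - φ' (x - x₀)) := by
      rw [map_smul, neg_sub, smul_sub, smul_smul, inv_mul_cancel₀ ht.ne', one_smul]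
    rw [hscale, norm_smul, norm_neg, norm_inv, Real.norm_of_nonneg ht.le, inv_mul_le_iff₀ ht]
    calc ‖t • v - φ' (x - x₀)‖ ≤ ε / C * ‖x - x₀‖ := hrem
      _ ≤ ε / C * (C * (t * ‖v‖)) := by gcongr
      _ = t * (ε * ‖v‖) := by field_simp

theorem eventually_exists_preimage_norm_le_of_infEDist_preimage_le {E F : Type*}
    [NormedAddCommGroup E] [NormedAddCommGroup F] {φ : E → F} {x₀ : E} {κ r C : ℝ}
    (hκ : 0 ≤ κ) (hr : 0 < r) (hκC : κ < C)
    (hreg : ∀ y : F, ‖y - φ x₀‖ < r →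
      infEDist x₀ (φ ⁻¹' {y}) ≤ ENNReal.ofReal (κ * ‖φ x₀ - y‖)) :
    ∀ᶠ y in 𝓝 (φ x₀), ∃ x, φ x = y ∧ ‖x - x₀‖ ≤ C * ‖y - φ x₀‖ := by
  filter_upwards [ball_mem_nhds _ hr] with y hy
  rw [mem_ball, dist_eq_norm] at hy
  rcases eq_or_ne y (φ x₀) with rfl | hne
  · exact ⟨x₀, rfl, by simp⟩
  have hpos : 0 < ‖φ x₀ - y‖ := norm_pos_iff.mpr (sub_ne_zero.mpr hne.symm)
  have hlt : infEDist x₀ (φ ⁻¹' {y}) < ENNReal.ofReal (C * ‖φ x₀ - y‖) :=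
    (hreg y hy).trans_lt <| (ENNReal.ofReal_lt_ofReal_iff (mul_pos (by linarith) hpos)).mpr
      (mul_lt_mul_of_pos_right hκC hpos)
  obtain ⟨x, hx, hdist⟩ := infEDist_lt_iff.mp hlt
  rw [edist_lt_ofReal, dist_comm, dist_eq_norm, norm_sub_rev (φ x₀)] at hdist
  exact ⟨x, hx, hdist.le⟩

theorem range_fderiv_closed_of_local_metric_estimate_general {X Y : Type*}
    [NormedAddCommGroup X] [NormedSpace ℝ X] [CompleteSpace X]
    [NormedAddCommGroup Y] [NormedSpace ℝ Y]
    (φ : X → Y) (xbar : X) (φ' : X →L[ℝ] Y) (hdiff : HasFDerivAt φ φ' xbar)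
    (κ r : ℝ) (hκ : 0 < κ) (hr : 0 < r)
    (hreg : ∀ y : Y, ‖y - φ xbar‖ < r →
      EMetric.infEdist xbar (φ ⁻¹' {y}) ≤ ENNReal.ofReal (κ * ‖φ xbar - y‖)) :
    IsClosed (Set.range φ') := by
  have hopen := eventually_exists_preimage_norm_le_of_infEDist_preimage_le hκ.le hr
    (lt_add_one κ) hreg
  have happrox := hdiff.exists_approx_preimage (by linarith) hopen one_half_pos
  have hsurj := φ'.surjective_of_exists_approx_preimage (by linarith) one_half_pos.le
    one_half_lt_one happrox
  rw [range_eq_univ.mpr hsurj]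
  exact isClosed_univ

theorem range_fderiv_closed_of_local_metric_estimate {X Y : Type*}
    [NormedAddCommGroup X] [NormedSpace ℝ X] [CompleteSpace X]
    [NormedAddCommGroup Y] [NormedSpace ℝ Y] [CompleteSpace Y]
    (φ : X → Y) (xbar : X) (φ' : X →L[ℝ] Y) (hdiff : HasFDerivAt φ φ' xbar)
    (κ r : ℝ) (hκ : 0 < κ) (hr : 0 < r)
    (hreg : ∀ y : Y, ‖y - φ xbar‖ < r →
      EMetric.infEdist xbar (φ ⁻¹' {y}) ≤ ENNReal.ofReal (κ * ‖φ xbar - y‖)) :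
    IsClosed (Set.range φ') :=
  range_fderiv_closed_of_local_metric_estimate_general φ xbar φ' hdiff κ r hκ hr hreg
end
end

section
/- Let φ : X → ℝ∪{+∞} be a proper lower semicontinuous function on a Banach space X and x̄ ∈ dom(φ). For δ > 0 set B_φ(x̄, δ) := {x ∈ B(x̄, δ) : |φ(x) − φ(x̄)| < δ}. Consider: (i) φ has the epigraphical Shapiro first order contact property at x̄; (ii) for every ε > 0 there exists δ > 0 such that d((x − u, φ(x) − φ(u)), T^B(epi(φ), (u, φ(u)))) ≤ ε(‖x − u‖ + |φ(x) − φ(u)|) for all x, u ∈ B_φ(x̄, δ); (iii) for every ε > 0 there exists δ > 0 such that φ'_H(u; x − u) ≤ φ(x) − φ(u) + ε(‖x − u‖ + |φ(x) − φ(u)|) for all x, u ∈ B_φ(x̄, δ). Then (i) implies (ii), and (iii) implies (ii). -/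
open Filter Metric Set Pointwise Topology
open scoped ENNReal

noncomputable section

lemma tangent_of_hadamard {X : Type*} [NormedAddCommGroup X] [NormedSpace ℝ X]
    (φ : X → EReal) (hbot : ∀ x, φ x ≠ ⊥) (u : X) (hu : φ u ≠ ⊤)
    (h : X) (β : ℝ) (hle : hadamardDeriv φ u h ≤ (β : EReal)) :
    (h, β) ∈ bouligand (epigraph φ) (u, (φ u).toReal) := by
  have hcu : φ u = (((φ u).toReal : ℝ) : EReal) := (EReal.coe_toReal hu (hbot u)).symm
  set cu := (φ u).toReal with hcud
  have key : ∀ n : ℕ, ∃ t : ℝ, ∃ h' : X, 0 < t ∧ t < 1/((n:ℝ)+1) ∧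
      dist h' h < 1/((n:ℝ)+1) ∧
      φ (u + t • h') ≤ ((cu + t * (β + 1/((n:ℝ)+1)) : ℝ) : EReal) := by
    intro n
    have hη : (0:ℝ) < 1/((n:ℝ)+1) := by positivity
    have hlt : liminf (fun p : ℝ × X =>
        (((1 : ℝ) / p.1 : ℝ) : EReal) * (φ (u + p.1 • p.2) - φ u))
        ((𝓝[>] (0 : ℝ)) ×ˢ 𝓝 h) < ((β + 1/((n:ℝ)+1) : ℝ) : EReal) := by
      refine lt_of_le_of_lt hle ?_
      exact_mod_cast (lt_add_of_pos_right β hη)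
    have hfreq := frequently_lt_of_liminf_lt (h := hlt)
    have hmem : (Ioo (0:ℝ) (1/((n:ℝ)+1))) ×ˢ (ball h (1/((n:ℝ)+1))) ∈
        ((𝓝[>] (0 : ℝ)) ×ˢ 𝓝 h) :=
      prod_mem_prod (Ioo_mem_nhdsGT_of_mem ⟨le_refl 0, hη⟩) (ball_mem_nhds h hη)
    obtain ⟨p, hp1, hp2⟩ :=
      (hfreq.and_eventually (eventually_of_mem hmem fun q hq => hq)).exists
    obtain ⟨⟨hpt0, hpt1⟩, hph⟩ := hp2
    refine ⟨p.1, p.2, hpt0, hpt1, hph, ?_⟩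
    rcases eq_or_ne (φ (u + p.1 • p.2)) ⊤ with htop | hne
    · exfalso
      rw [htop, hcu, EReal.top_sub_coe] at hp1
      have h1t : (0:ℝ) < 1 / p.1 := by positivity
      rw [EReal.mul_top_of_pos (by exact_mod_cast h1t)] at hp1
      exact not_top_lt hp1
    · have hay : φ (u + p.1 • p.2) = (((φ (u + p.1 • p.2)).toReal : ℝ) : EReal) :=
        (EReal.coe_toReal hne (hbot _)).symm
      set a := (φ (u + p.1 • p.2)).toReal with had
      rw [hay, hcu, ← EReal.coe_sub, ← EReal.coe_mul] at hp1
      have hreal : (1/p.1) * (a - cu) < β + 1/((n:ℝ)+1) := by exact_mod_cast hp1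
      rw [hay]
      refine EReal.coe_le_coe_iff.2 ?_
      have h2 : a - cu < (β + 1/((n:ℝ)+1)) * p.1 := by
        refine (div_lt_iff₀ hpt0).1 ?_
        rwa [div_eq_inv_mul, ← one_div]
      nlinarith
  choose ts vs h0 h1 h2 h3 using key
  have hone : Tendsto (fun n : ℕ => 1/((n:ℝ)+1)) atTop (𝓝 0) :=
    tendsto_one_div_add_atTop_nhds_zero_nat
  refine ⟨fun n => (vs n, β + 1/((n:ℝ)+1)), ts, ?_, ?_, h0, ?_⟩
  · refine Tendsto.prodMk_nhds ?_ ?_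
    · exact tendsto_iff_dist_tendsto_zero.2
        (squeeze_zero (fun n => dist_nonneg) (fun n => (h2 n).le) hone)
    · simpa using tendsto_const_nhds.add hone
  · exact squeeze_zero (fun n => (h0 n).le) (fun n => (h1 n).le) hone
  · intro n
    show φ _ ≤ _
    simp only [Prod.smul_mk, Prod.mk_add_mk, smul_eq_mul]
    exact h3 n

theorem epigraphical_shapiro_implications {X : Type*} [NormedAddCommGroup X]
    [NormedSpace ℝ X] [CompleteSpace X]
    (φ : X → EReal) (hlsc : LowerSemicontinuous φ) (hbot : ∀ x, φ x ≠ ⊥)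
    (xbar : X) (hdom : φ xbar ≠ ⊤)
    (Bphi : ℝ → Set X)
    (hBphi : ∀ δ : ℝ, Bphi δ =
      {x | x ∈ ball xbar δ ∧ (((φ xbar).toReal - δ : ℝ) : EReal) < φ x ∧
        φ x < (((φ xbar).toReal + δ : ℝ) : EReal)}) :
    (shapiro (epigraph φ) (xbar, (φ xbar).toReal) →
      ∀ ε > 0, ∃ δ > 0, ∀ x ∈ Bphi δ, ∀ u ∈ Bphi δ,
        infDist (x - u, (φ x).toReal - (φ u).toReal)
            (bouligand (epigraph φ) (u, (φ u).toReal)) ≤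
          ε * (‖x - u‖ + |(φ x).toReal - (φ u).toReal|)) ∧
    ((∀ ε > 0, ∃ δ > 0, ∀ x ∈ Bphi δ, ∀ u ∈ Bphi δ,
        hadamardDeriv φ u (x - u) ≤
          (((φ x).toReal - (φ u).toReal +
            ε * (‖x - u‖ + |(φ x).toReal - (φ u).toReal|) : ℝ) : EReal)) →
      ∀ ε > 0, ∃ δ > 0, ∀ x ∈ Bphi δ, ∀ u ∈ Bphi δ,
        infDist (x - u, (φ x).toReal - (φ u).toReal)
            (bouligand (epigraph φ) (u, (φ u).toReal)) ≤
          ε * (‖x - u‖ + |(φ x).toReal - (φ u).toReal|)) := by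
  have extract : ∀ δ > (0:ℝ), ∀ x ∈ Bphi δ, x ∈ ball xbar δ ∧ φ x ≠ ⊤ ∧
      |(φ x).toReal - (φ xbar).toReal| < δ := by
    intro δ hδ x hx
    rw [hBphi] at hx
    obtain ⟨hball, hlo, hhi⟩ := hx
    have hxt : φ x ≠ ⊤ := (lt_of_lt_of_le hhi le_top).ne
    have hxe : φ x = (((φ x).toReal : ℝ) : EReal) := (EReal.coe_toReal hxt (hbot x)).symm
    rw [hxe] at hlo hhi
    have hlo' : (φ xbar).toReal - δ < (φ x).toReal := EReal.coe_lt_coe_iff.1 hlo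
    have hhi' : (φ x).toReal < (φ xbar).toReal + δ := EReal.coe_lt_coe_iff.1 hhi
    exact ⟨hball, hxt, abs_sub_lt_iff.2 ⟨by linarith, by linarith⟩⟩
  constructor
  · intro hsh ε hε
    obtain ⟨δ, hδ, H⟩ := hsh ε hε
    refine ⟨δ, hδ, ?_⟩
    intro x hx u hu
    obtain ⟨hxb, hxt, hxa⟩ := extract δ hδ x hx
    obtain ⟨hub, hut, hua⟩ := extract δ hδ u hu
    have hxe : φ x = (((φ x).toReal : ℝ) : EReal) := (EReal.coe_toReal hxt (hbot x)).symm
    have hue : φ u = (((φ u).toReal : ℝ) : EReal) := (EReal.coe_toReal hut (hbot u)).symm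
    have hmemx : (x, (φ x).toReal) ∈ epigraph φ ∩ ball (xbar, (φ xbar).toReal) δ := by
      refine ⟨le_of_eq hxe, ?_⟩
      rw [mem_ball, Prod.dist_eq]
      exact max_lt (mem_ball.1 hxb) (by simpa [Real.dist_eq] using hxa)
    have hmemu : (u, (φ u).toReal) ∈ epigraph φ ∩ ball (xbar, (φ xbar).toReal) δ := by
      refine ⟨le_of_eq hue, ?_⟩
      rw [mem_ball, Prod.dist_eq]
      exact max_lt (mem_ball.1 hub) (by simpa [Real.dist_eq] using hua)
    have hH := H _ hmemx _ hmemu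
    rw [Prod.mk_sub_mk] at hH
    refine hH.trans ?_
    refine mul_le_mul_of_nonneg_left ?_ hε.le
    rw [Prod.norm_def]
    refine max_le ?_ ?_
    · exact le_add_of_nonneg_right (abs_nonneg _)
    · simp only [Real.norm_eq_abs]
      exact le_add_of_nonneg_left (norm_nonneg _)
  · intro H ε hε
    obtain ⟨δ, hδ, H2⟩ := H ε hε
    refine ⟨δ, hδ, ?_⟩
    intro x hx u hu
    obtain ⟨hub, hut, hua⟩ := extract δ hδ u hu
    have hb := H2 x hx u hu
    set c := ε * (‖x - u‖ + |(φ x).toReal - (φ u).toReal|) with hc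
    have hc0 : 0 ≤ c :=
      mul_nonneg hε.le (add_nonneg (norm_nonneg _) (abs_nonneg _))
    have hmem := tangent_of_hadamard φ hbot u hut (x - u)
      ((φ x).toReal - (φ u).toReal + c) hb
    refine (infDist_le_dist_of_mem hmem).trans ?_
    rw [Prod.dist_eq]
    simp only [dist_self, Real.dist_eq]
    rw [sub_add_cancel_left, abs_neg, abs_of_nonneg hc0]
    exact max_le hc0 le_rfl
end
end

section
/- Let φ : X → Y be a continuously differentiable mapping between Banach spaces, A a closed convex cone in Y, and x̄ ∈ φ⁻¹(A). If the Robinson qualification 0 ∈ int(φ(x̄) + ∇φ(x̄)(X) − A) holds, then φ⁻¹(A) has the Shapiro first order contact property at x̄. -/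
open Filter Metric Set Pointwise Topology
open scoped ENNReal

noncomputable section

/-!
Robinson's condition says that the cone generated by `φ x̄ + φ'(x̄)(X) - A` is all of `Y`: the
linear system `D w + s • b - a = y` with `s ≥ 0`, `a ∈ A` is solvable for `D = φ'(x̄)` and
`b = φ x̄`. Baire's theorem and an iteration make it solvable with `‖(w, s, a)‖ ≤ K ‖y‖`,
uniformly for `(D, b)` near `(φ'(x̄), φ x̄)`. A Newton iteration in `(x, c, γ)` that drives
`φ x - c • a - γ` to zero then gives metric regularity: `d(p, φ⁻¹ A) ≤ 2 K ‖φ p - a‖` for `p` near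
`x̄` and `a ∈ A` near `φ x̄`. For `x, u ∈ φ⁻¹ A` near `x̄`, solving the linear system at `u` for the
remainder `r = φ x - φ u - φ'(u)(x - u)` yields `w` with `‖w‖ ≤ K ‖r‖` such that
`φ u + t φ'(u)(x - u + w)` is a conic combination of `φ u`, `φ x` and a point of `A` for small
`t > 0`. Metric regularity makes `x - u + w` a Bouligand tangent vector at `u`, and
`‖r‖ ≤ ε ‖x - u‖` uniformly near `x̄`.
-/
theorem exists_pointedCone_coe_eq {E : Type*} [NormedAddCommGroup E] [NormedSpace ℝ E]
    {A : Set E} (hcl : IsClosed A) (hconv : Convex ℝ A)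
    (hcone : ∀ c : ℝ, 0 < c → ∀ a ∈ A, c • a ∈ A) (hne : A.Nonempty) :
    ∃ C : PointedCone ℝ E, (C : Set E) = A := by
  obtain ⟨a, ha⟩ := hne
  have h0 : (0 : E) ∈ A := by
    have hray : Tendsto (fun c : ℝ => c • a) (𝓝[>] 0) (𝓝 0) :=
      tendsto_nhdsWithin_of_tendsto_nhds
        ((continuous_id.smul continuous_const).tendsto' (0 : ℝ) 0 (zero_smul ℝ a))
    exact hcl.mem_of_tendsto hray (eventually_nhdsWithin_of_forall fun c hc => hcone c hc a ha)
  have hadd : ∀ x ∈ A, ∀ y ∈ A, x + y ∈ A := fun x hx y hy => by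
    simpa [smul_add, smul_smul] using hcone 2 two_pos _
      (hconv hx hy (by norm_num : (0 : ℝ) ≤ 1 / 2) (by norm_num : (0 : ℝ) ≤ 1 / 2) (by norm_num))
  exact ⟨ConvexCone.toPointedCone ⟨A, fun c hc x hx => hcone c hc x hx,
    fun x hx y hy => hadd x hx y hy⟩ h0, rfl⟩

theorem exists_mem_eq_zero_of_halving_step {E Y : Type*} [PseudoMetricSpace E] [CompleteSpace E]
    [NormedAddCommGroup Y] {C : Set E} (hC : IsClosed C) {F : E → Y} (hF : Continuous F)
    {K R : ℝ} (hK : 0 ≤ K) {e₀ : E} (he₀ : e₀ ∈ C) (hR : 2 * K * ‖F e₀‖ < R)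
    (hstep : ∀ e ∈ C, dist e₀ e < R → ‖F e‖ ≤ ‖F e₀‖ →
      ∃ e' ∈ C, dist e e' ≤ K * ‖F e‖ ∧ ‖F e'‖ ≤ ‖F e‖ / 2) :
    ∃ e ∈ C, F e = 0 ∧ dist e₀ e ≤ 2 * K * ‖F e₀‖ := by
  set r := ‖F e₀‖
  -- after `n` steps, a budget of `2 * K * r / 2 ^ n` still covers all later moves
  let P : ℕ → E → Prop := fun n e =>
    e ∈ C ∧ ‖F e‖ ≤ r / 2 ^ n ∧ dist e₀ e + 2 * K * r / 2 ^ n ≤ 2 * K * r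
  have hnext : ∀ n e, P n e → ∃ e', P (n + 1) e' ∧ dist e e' ≤ 2 * K * r / 2 / 2 ^ n := by
    rintro n e ⟨he, hFe, hde⟩
    have hKFe : K * ‖F e‖ ≤ K * r / 2 ^ n := by
      rw [mul_div_assoc]; exact mul_le_mul_of_nonneg_left hFe hK
    have hdouble : 2 * K * r / 2 ^ n = 2 * (K * r / 2 ^ n) := by ring
    have hhalf : 2 * K * r / 2 ^ (n + 1) = K * r / 2 ^ n := by rw [pow_succ]; field_simp
    have hhalf' : 2 * K * r / 2 / 2 ^ n = K * r / 2 ^ n := by field_simp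
    have hpos : 0 ≤ K * r / 2 ^ n := by positivity
    obtain ⟨e', he', hee', hFe'⟩ := hstep e he (by linarith)
      (hFe.trans (div_le_self (norm_nonneg _) (one_le_pow₀ one_le_two)))
    refine ⟨e', ⟨he', ?_, ?_⟩, by linarith⟩
    · rw [pow_succ, ← div_div]; linarith
    · linarith [dist_triangle e₀ e e']
  choose! g hgP hgd using hnext
  let s : ℕ → E := fun n => Nat.rec e₀ g n
  have hs : ∀ n, P n (s n) := by
    intro n
    induction n with
    | zero => show P 0 e₀; exact ⟨he₀, by simp [r], by simp⟩
    | succ n ih => exact hgP n _ ih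
  have hsd : ∀ n, dist (s n) (s (n + 1)) ≤ 2 * K * r / 2 / 2 ^ n := fun n => hgd n _ (hs n)
  obtain ⟨e, he⟩ := cauchySeq_tendsto_of_complete (cauchySeq_of_le_geometric_two hsd)
  refine ⟨e, hC.mem_of_tendsto he (Eventually.of_forall fun n => (hs n).1), ?_,
    dist_le_of_le_geometric_two_of_tendsto₀ hsd he⟩
  have hF0 : Tendsto (fun n => F (s n)) atTop (𝓝 0) :=
    squeeze_zero_norm (fun n => (hs n).2.1)
      (tendsto_const_nhds.div_atTop (tendsto_pow_atTop_atTop_of_one_lt one_lt_two))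
  exact tendsto_nhds_unique ((hF.tendsto e).comp he) hF0

section BoundedlySurjOn

variable {E Y : Type*} [NormedAddCommGroup E] [NormedSpace ℝ E]
  [NormedAddCommGroup Y] [NormedSpace ℝ Y]

def BoundedlySurjOn (L : E →L[ℝ] Y) (C : Set E) (K : ℝ) : Prop :=
  ∀ y, ∃ e ∈ C, ‖e‖ ≤ K * ‖y‖ ∧ L e = y

theorem boundedlySurjOn_of_approx [CompleteSpace E] {C : PointedCone ℝ E}
    (hC : IsClosed (C : Set E)) {L : E →L[ℝ] Y} {M : ℝ} (hM : 0 ≤ M)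
    (happrox : ∀ y, ∃ e ∈ C, ‖e‖ ≤ M * ‖y‖ ∧ ‖y - L e‖ ≤ ‖y‖ / 2) :
    BoundedlySurjOn L C (2 * M) := by
  intro y
  obtain ⟨e, he, hLe, hdist⟩ := exists_mem_eq_zero_of_halving_step hC
    (F := fun e => y - L e) (by fun_prop) hM C.zero_mem (R := 2 * M * ‖y‖ + 1) (by simp)
    fun e he _ _ => by
      obtain ⟨d, hd, hdM, hdL⟩ := happrox (y - L e)
      exact ⟨e + d, C.add_mem he hd, by simpa using hdM, by simpa [sub_sub] using hdL⟩
  exact ⟨e, he, by simpa using hdist, (sub_eq_zero.1 hLe).symm⟩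

theorem boundedlySurjOn_of_ball_subset_closure [CompleteSpace E] {C : PointedCone ℝ E}
    (hC : IsClosed (C : Set E)) {L L' : E →L[ℝ] Y} {ρ : ℝ} (hρ : 0 < ρ)
    (hball : ball 0 ρ ⊆ closure (L '' (C ∩ closedBall 0 1))) (hL' : ‖L' - L‖ ≤ ρ / 8) :
    BoundedlySurjOn L' C (4 / ρ) := by
  rw [show 4 / ρ = 2 * (2 / ρ) by ring]
  refine boundedlySurjOn_of_approx hC (by positivity) fun y => ?_
  set t := 2 * ‖y‖ / ρ with ht
  have ht0 : 0 ≤ t := by positivity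
  have hy : t • t⁻¹ • y = y := by
    rcases eq_or_ne y 0 with rfl | hy
    · simp
    · exact smul_inv_smul₀ (by positivity) y
  have hmem : t⁻¹ • y ∈ ball (0 : Y) ρ := by
    rcases eq_or_ne y 0 with rfl | hy
    · simpa using hρ
    · have : ‖y‖ ≠ 0 := norm_ne_zero_iff.2 hy
      rw [mem_ball_zero_iff, norm_smul, norm_inv, Real.norm_of_nonneg ht0, ht]
      field_simp
      linarith
  obtain ⟨_, ⟨e, ⟨he, he1⟩, rfl⟩, hclose⟩ :=
    Metric.mem_closure_iff.1 (hball hmem) (ρ / 8) (by positivity)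
  rw [mem_closedBall_zero_iff] at he1
  refine ⟨t • e, C.smul_mem ht0 he, ?_, ?_⟩
  · rw [norm_smul, Real.norm_of_nonneg ht0]
    calc t * ‖e‖ ≤ t * 1 := by gcongr
      _ = 2 / ρ * ‖y‖ := by ring
  · have hsplit : y - L' (t • e) = t • (t⁻¹ • y - L e) + (L - L') (t • e) := by
      rw [sub_apply, map_smul, map_smul, smul_sub, hy]
      abel
    have hpert : ‖(L - L') (t • e)‖ ≤ ρ / 8 * t := by
      calc ‖(L - L') (t • e)‖ ≤ ‖L - L'‖ * ‖t • e‖ := (L - L').le_opNorm _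
        _ ≤ ρ / 8 * (t * 1) := by
          rw [norm_sub_rev, norm_smul, Real.norm_of_nonneg ht0]; gcongr
        _ = ρ / 8 * t := by ring
    calc ‖y - L' (t • e)‖ ≤ t * ‖t⁻¹ • y - L e‖ + ρ / 8 * t := by
          rw [hsplit]
          refine (norm_add_le _ _).trans (add_le_add ?_ hpert)
          rw [norm_smul, Real.norm_of_nonneg ht0]
      _ ≤ t * (ρ / 8) + ρ / 8 * t := by
          gcongr; rw [← dist_eq_norm]; exact hclose.le
      _ = ‖y‖ / 2 := by rw [ht]; field_simp; ring

theorem exists_ball_subset_closure_of_convex [CompleteSpace Y] {S : Set Y} (hS : Convex ℝ S)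
    (hcover : ∀ y, ∃ n : ℕ, y ∈ ((n : ℝ) + 1) • S) : ∃ ρ > 0, ball 0 ρ ⊆ closure S := by
  have hunion : ⋃ n : ℕ, closure (((n : ℝ) + 1) • S) = univ :=
    eq_univ_of_forall fun y =>
      let ⟨n, hn⟩ := hcover y
      mem_iUnion.2 ⟨n, subset_closure hn⟩
  obtain ⟨n, y, hy⟩ := nonempty_interior_of_iUnion_of_closed (fun _ => isClosed_closure) hunion
  rw [closure_smul₀, interior_smul₀ (by positivity)] at hy
  obtain ⟨y₀, hy₀, -⟩ := hy
  obtain ⟨r, hr, hball⟩ := isOpen_iff.1 isOpen_interior y₀ hy₀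
  obtain ⟨m, hm⟩ := hcover (-y₀)
  set c : ℝ := (m : ℝ) + 1
  have hc : 0 < c := by positivity
  have hz : c⁻¹ • -y₀ ∈ S := (mem_smul_set_iff_inv_smul_mem₀ hc.ne' _ _).1 hm
  refine ⟨r / (c + 1), by positivity, fun y hy => ?_⟩
  have hy' : y₀ + (c + 1) • y ∈ closure S := by
    refine interior_subset (hball ?_)
    rw [mem_ball, dist_eq_norm, add_sub_cancel_left, norm_smul, Real.norm_of_nonneg (by positivity)]
    rw [mem_ball_zero_iff] at hy
    calc (c + 1) * ‖y‖ < (c + 1) * (r / (c + 1)) := by gcongr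
      _ = r := by field_simp
  -- Convexity carries the ball around the interior point `y₀` to a ball around `0`,
  -- through the point `-y₀ / c` of `S` on the other side of `0`.
  have hcomb := hS.closure hy' (subset_closure hz) (a := (c + 1)⁻¹) (b := c / (c + 1))
    (by positivity) (by positivity) (by field_simp; ring)
  convert hcomb using 1
  rw [smul_add, smul_smul, smul_smul, inv_mul_cancel₀ (by positivity), one_smul,
    show c / (c + 1) * c⁻¹ = (c + 1)⁻¹ by field_simp, smul_neg]
  abel

end BoundedlySurjOn

section Robinson

variable {X Y : Type*} [NormedAddCommGroup X] [NormedSpace ℝ X]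
  [NormedAddCommGroup Y] [NormedSpace ℝ Y]

/-- The image of `robinsonCone X C` under this map is the cone generated by Robinson's set
`b + D(X) - C`. -/
def robinsonMap (D : X →L[ℝ] Y) (b : Y) : X × ℝ × Y →L[ℝ] Y :=
  D.coprod (((ContinuousLinearMap.id ℝ ℝ).smulRight b).coprod (-ContinuousLinearMap.id ℝ Y))

@[simp]
theorem robinsonMap_apply (D : X →L[ℝ] Y) (b : Y) (e : X × ℝ × Y) :
    robinsonMap D b e = D e.1 + e.2.1 • b - e.2.2 := by
  simp [robinsonMap, sub_eq_add_neg, add_assoc]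

variable (X) in
def robinsonCone (C : PointedCone ℝ Y) : PointedCone ℝ (X × ℝ × Y) :=
  (⊤ : PointedCone ℝ X).prod ((PointedCone.positive ℝ ℝ).prod C)

@[simp]
theorem mem_robinsonCone {C : PointedCone ℝ Y} {e : X × ℝ × Y} :
    e ∈ robinsonCone X C ↔ 0 ≤ e.2.1 ∧ e.2.2 ∈ C := by
  simp [robinsonCone, Submodule.mem_prod, PointedCone.mem_positive]

theorem isClosed_robinsonCone {C : PointedCone ℝ Y} (hC : IsClosed (C : Set Y)) :
    IsClosed (robinsonCone X C : Set (X × ℝ × Y)) := by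
  have : (robinsonCone X C : Set (X × ℝ × Y)) = univ ×ˢ (Ici 0 ×ˢ (C : Set Y)) := by
    ext; simp
  rw [this]
  exact isClosed_univ.prod (isClosed_Ici.prod hC)

theorem norm_robinsonMap_sub_le (D D' : X →L[ℝ] Y) (b b' : Y) :
    ‖robinsonMap D' b' - robinsonMap D b‖ ≤ ‖D' - D‖ + ‖b' - b‖ := by
  refine ContinuousLinearMap.opNorm_le_bound _ (by positivity) fun e => ?_
  have he : (robinsonMap D' b' - robinsonMap D b) e = (D' - D) e.1 + e.2.1 • (b' - b) := by
    simp only [sub_apply, robinsonMap_apply]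
    module
  have h1 := norm_fst_le e
  have h2 : ‖e.2.1‖ ≤ ‖e‖ := (norm_fst_le e.2).trans (norm_snd_le e)
  calc ‖(robinsonMap D' b' - robinsonMap D b) e‖
      ≤ ‖(D' - D) e.1‖ + ‖e.2.1 • (b' - b)‖ := he ▸ norm_add_le _ _
    _ ≤ ‖D' - D‖ * ‖e.1‖ + ‖e.2.1‖ * ‖b' - b‖ := by
        rw [norm_smul]; gcongr; exact (D' - D).le_opNorm _
    _ ≤ ‖D' - D‖ * ‖e‖ + ‖e‖ * ‖b' - b‖ := by gcongr
    _ = (‖D' - D‖ + ‖b' - b‖) * ‖e‖ := by ring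

theorem continuous_robinsonMap :
    Continuous fun Db : (X →L[ℝ] Y) × Y => robinsonMap Db.1 Db.2 := by
  refine (LipschitzWith.of_dist_le_mul (K := 2) fun Db Db' => ?_).continuous
  rw [dist_eq_norm, NNReal.coe_ofNat, Prod.dist_eq, dist_eq_norm, dist_eq_norm]
  refine (norm_robinsonMap_sub_le _ _ _ _).trans ?_
  linarith [le_max_left ‖Db.1 - Db'.1‖ ‖Db.2 - Db'.2‖, le_max_right ‖Db.1 - Db'.1‖ ‖Db.2 - Db'.2‖]

theorem exists_ball_subset_closure_robinsonMap_image [CompleteSpace Y] {C : PointedCone ℝ Y}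
    {D : X →L[ℝ] Y} {b : Y} (hRob : (0 : Y) ∈ interior {y | ∃ u : X, ∃ a ∈ C, y = b + D u - a}) :
    ∃ ρ > 0, ball 0 ρ ⊆ closure (robinsonMap D b '' (robinsonCone X C ∩ closedBall 0 1)) := by
  refine exists_ball_subset_closure_of_convex
    (((robinsonCone X C).convex.inter (convex_closedBall 0 1)).linear_image
      (robinsonMap D b : X × ℝ × Y →ₗ[ℝ] Y)) fun y => ?_
  obtain ⟨r, hr, hyr⟩ := (absorbent_nhds_zero (𝕜 := ℝ)
    (mem_interior_iff_mem_nhds.1 hRob) y).exists_pos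
  obtain ⟨_, ⟨u, a, ha, rfl⟩, rfl⟩ :=
    hyr r (by rw [Real.norm_of_nonneg hr.le]) (mem_singleton _)
  set e : X × ℝ × Y := (r • u, r, r • a)
  have he : e ∈ robinsonCone X C := by simp [e, hr.le, C.smul_mem hr.le ha]
  have hLe : robinsonMap D b e = r • (b + D u - a) := by
    simp only [e, robinsonMap_apply, map_smul]; module
  obtain ⟨n, hn⟩ := exists_nat_ge ‖e‖
  refine ⟨n, (mem_smul_set_iff_inv_smul_mem₀ (by positivity) _ _).2
    ⟨((n : ℝ) + 1)⁻¹ • e, ⟨(robinsonCone X C).smul_mem (by positivity) he, ?_⟩, ?_⟩⟩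
  · rw [mem_closedBall_zero_iff, norm_smul, Real.norm_of_nonneg (by positivity)]
    rw [inv_mul_le_one₀ (by positivity)]
    linarith
  · simp only [map_smul, hLe]

theorem eventually_boundedlySurjOn_robinsonMap [CompleteSpace X] [CompleteSpace Y]
    {C : PointedCone ℝ Y} (hC : IsClosed (C : Set Y)) {D : X →L[ℝ] Y} {b : Y}
    (hRob : (0 : Y) ∈ interior {y | ∃ u : X, ∃ a ∈ C, y = b + D u - a}) :
    ∃ K > 0, ∀ᶠ Db in 𝓝 (D, b), BoundedlySurjOn (robinsonMap Db.1 Db.2) (robinsonCone X C) K := by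
  obtain ⟨ρ, hρ, hball⟩ := exists_ball_subset_closure_robinsonMap_image hRob
  refine ⟨4 / ρ, by positivity, ?_⟩
  filter_upwards [continuous_robinsonMap.continuousAt.eventually_mem
    (closedBall_mem_nhds _ (by positivity : 0 < ρ / 8))] with Db hDb
  exact boundedlySurjOn_of_ball_subset_closure (isClosed_robinsonCone hC) hρ hball
    (mem_closedBall_iff_norm.1 hDb)

end Robinson

section Nonlinear

variable {X Y : Type*} [NormedAddCommGroup X] [NormedSpace ℝ X]
  [NormedAddCommGroup Y] [NormedSpace ℝ Y]

theorem ContDiff.exists_ball_norm_sub_fderiv_le {φ : X → Y} (hφ : ContDiff ℝ 1 φ) (x₀ : X)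
    {η : ℝ} (hη : 0 < η) :
    ∃ δ > 0, ∀ p ∈ ball x₀ δ, ∀ q ∈ ball x₀ δ,
      ‖φ q - φ p - fderiv ℝ φ p (q - p)‖ ≤ η * ‖q - p‖ := by
  obtain ⟨δ, hδ, hcont⟩ := Metric.continuousAt_iff.1
    (hφ.continuous_fderiv one_ne_zero).continuousAt (η / 2) (half_pos hη)
  refine ⟨δ, hδ, fun p hp q hq => (convex_ball x₀ δ).norm_image_sub_le_of_norm_fderiv_le'
    (fun z _ => hφ.differentiable one_ne_zero z) (fun z hz => ?_) hp hq⟩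
  rw [← dist_eq_norm]
  linarith [dist_triangle_right (fderiv ℝ φ z) (fderiv ℝ φ p) (fderiv ℝ φ x₀), hcont hz, hcont hp]

def robinsonResidual (φ : X → Y) (a : Y) (e : X × ℝ × Y) : Y := φ e.1 - e.2.1 • a - e.2.2

theorem mem_preimage_of_robinsonResidual_eq_zero {φ : X → Y} {C : PointedCone ℝ Y} {a : Y}
    (ha : a ∈ C) {e : X × ℝ × Y} (he : e ∈ robinsonCone X C) (h : robinsonResidual φ a e = 0) :
    e.1 ∈ φ ⁻¹' C := by
  rw [robinsonResidual, sub_sub, sub_eq_zero] at h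
  rw [mem_robinsonCone] at he
  rw [mem_preimage, h]
  exact C.add_mem (C.smul_mem he.1 ha) he.2

theorem exists_halving_step_robinsonResidual {φ : X → Y} {C : PointedCone ℝ Y}
    {D : X →L[ℝ] Y} {a : Y} {K : ℝ} (hK : 0 < K)
    (hsolv : BoundedlySurjOn (robinsonMap D a) (robinsonCone X C) K)
    {e : X × ℝ × Y} (he : e ∈ robinsonCone X C) (hc : K * ‖robinsonResidual φ a e‖ ≤ e.2.1)
    (hlin : ∀ y, ‖y - e.1‖ ≤ K * ‖robinsonResidual φ a e‖ →
      ‖φ y - φ e.1 - D (y - e.1)‖ ≤ (2 * K)⁻¹ * ‖y - e.1‖) :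
    ∃ e' ∈ robinsonCone X C, dist e e' ≤ K * ‖robinsonResidual φ a e‖ ∧
      ‖robinsonResidual φ a e'‖ ≤ ‖robinsonResidual φ a e‖ / 2 := by
  obtain ⟨⟨w, s, α⟩, hd, hdK, hdL⟩ := hsolv (-robinsonResidual φ a e)
  simp only [SetLike.mem_coe, mem_robinsonCone] at he hd
  rw [norm_neg] at hdK
  have hs : s ≤ K * ‖robinsonResidual φ a e‖ :=
    (le_abs_self s).trans (((norm_fst_le (s, α)).trans (norm_snd_le (w, s, α))).trans hdK)
  have hw : ‖w‖ ≤ K * ‖robinsonResidual φ a e‖ := (norm_fst_le _).trans hdK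
  have hres : robinsonResidual φ a (e + (w, -s, α)) = φ (e.1 + w) - φ e.1 - D w := by
    simp only [robinsonResidual, robinsonMap_apply] at hdL ⊢
    simp only [Prod.fst_add, Prod.snd_add]
    linear_combination (norm := module) hdL
  refine ⟨e + (w, -s, α), ?_, by simpa [dist_eq_norm, Prod.norm_def] using hdK, ?_⟩
  · rw [mem_robinsonCone]
    exact ⟨show 0 ≤ e.2.1 + -s by linarith, C.add_mem he.2 hd.2⟩
  have hlin_w := hlin (e.1 + w) (by rwa [add_sub_cancel_left])
  rw [add_sub_cancel_left] at hlin_w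
  calc ‖robinsonResidual φ a (e + (w, -s, α))‖ ≤ (2 * K)⁻¹ * ‖w‖ := hres ▸ hlin_w
    _ ≤ (2 * K)⁻¹ * (K * ‖robinsonResidual φ a e‖) := by gcongr
    _ = ‖robinsonResidual φ a e‖ / 2 := by field_simp

theorem eventually_infDist_preimage_le [CompleteSpace X] [CompleteSpace Y] {φ : X → Y}
    (hφ : ContDiff ℝ 1 φ) {C : PointedCone ℝ Y} (hC : IsClosed (C : Set Y)) {x₀ : X} {K : ℝ}
    (hK : 0 < K)
    (hsolv : ∀ᶠ z in 𝓝 (x₀, φ x₀),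
      BoundedlySurjOn (robinsonMap (fderiv ℝ φ z.1) z.2) (robinsonCone X C) K) :
    ∀ᶠ z in 𝓝 (x₀, φ x₀), z.2 ∈ C → infDist z.1 (φ ⁻¹' C) ≤ 2 * K * ‖φ z.1 - z.2‖ := by
  obtain ⟨δ, hδ, hsolvδ⟩ := Metric.eventually_nhds_iff_ball.1 hsolv
  obtain ⟨δ', hδ', hlin⟩ := hφ.exists_ball_norm_sub_fderiv_le x₀ (inv_pos.2 (mul_pos two_pos hK))
  obtain ⟨r, hr, hrδ, hrδ', hr1⟩ : ∃ r > 0, r ≤ δ ∧ r ≤ δ' ∧ r ≤ 1 :=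
    ⟨min (min δ δ') 1, by positivity, by simp, by simp, by simp⟩
  have hres : Tendsto (fun z : X × Y => φ z.1 - z.2) (𝓝 (x₀, φ x₀)) (𝓝 0) := by
    have : Continuous fun z : X × Y => φ z.1 - z.2 := by fun_prop
    simpa using this.tendsto (x₀, φ x₀)
  filter_upwards [ball_mem_nhds (x₀, φ x₀) (half_pos hr),
    hres.eventually (ball_mem_nhds 0 (show 0 < r / (8 * K) by positivity))]
    with ⟨p, a⟩ hpa hsmall ha
  simp only [mem_ball, Prod.dist_eq, max_lt_iff, dist_zero_right] at hpa hsmall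
  obtain ⟨hp, ha'⟩ := hpa
  have hres₀ : robinsonResidual φ a (p, 1, 0) = φ p - a := by simp [robinsonResidual]
  have hKres₀ : K * ‖φ p - a‖ < r / 8 := by
    calc K * ‖φ p - a‖ < K * (r / (8 * K)) := by gcongr
      _ = r / 8 := by field_simp
  have hstep : ∀ e ∈ (robinsonCone X C : Set (X × ℝ × Y)), dist (p, 1, 0) e < r / 4 →
      ‖robinsonResidual φ a e‖ ≤ ‖robinsonResidual φ a (p, 1, 0)‖ →
      ∃ e' ∈ (robinsonCone X C : Set (X × ℝ × Y)), dist e e' ≤ K * ‖robinsonResidual φ a e‖ ∧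
        ‖robinsonResidual φ a e'‖ ≤ ‖robinsonResidual φ a e‖ / 2 := by
    rintro ⟨x, c, γ⟩ he hde hFe
    rw [hres₀] at hFe
    simp only [Prod.dist_eq, max_lt_iff, Real.dist_eq] at hde
    obtain ⟨hpx, hc, -⟩ := hde
    have hx : dist x x₀ < 3 * r / 4 := by linarith [dist_triangle x p x₀, dist_comm p x]
    have hKres : K * ‖robinsonResidual φ a (x, c, γ)‖ < r / 8 :=
      (mul_le_mul_of_nonneg_left hFe hK.le).trans_lt hKres₀
    refine exists_halving_step_robinsonResidual hK
      (hsolvδ (x, a) (by simp only [mem_ball, Prod.dist_eq, max_lt_iff]; constructor <;> linarith))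
      he (by simp only; linarith [abs_lt.1 hc]) fun y hy => hlin x (mem_ball.2 (by linarith)) y ?_
    rw [mem_ball]
    linarith [dist_triangle y x x₀, dist_eq_norm y x]
  obtain ⟨⟨q, c, γ⟩, hqcγ, hq, hdist⟩ := exists_mem_eq_zero_of_halving_step
    (isClosed_robinsonCone hC) (F := robinsonResidual φ a)
    (by unfold robinsonResidual; fun_prop) hK.le (e₀ := (p, 1, 0)) (by simp) (R := r / 4)
    (by rw [hres₀]; linarith) hstep
  calc infDist p (φ ⁻¹' C) ≤ dist p q :=
        infDist_le_dist_of_mem (mem_preimage_of_robinsonResidual_eq_zero ha hqcγ hq)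
    _ ≤ dist (p, (1 : ℝ), (0 : Y)) (q, c, γ) := by rw [Prod.dist_eq]; exact le_max_left _ _
    _ ≤ 2 * K * ‖φ p - a‖ := by rwa [← hres₀]

theorem mem_bouligand_of_tendsto_infDist {S : Set X} {u w : X} (hu : u ∈ S)
    (h : Tendsto (fun t : ℝ => t⁻¹ * infDist (u + t • w) S) (𝓝[>] 0) (𝓝 0)) :
    w ∈ bouligand S u := by
  set ts : ℕ → ℝ := fun n => 1 / ((n : ℝ) + 1)
  have hpos : ∀ n, 0 < ts n := fun n => by positivity
  have hts : Tendsto ts atTop (𝓝[>] 0) :=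
    tendsto_nhdsWithin_iff.2 ⟨tendsto_one_div_add_atTop_nhds_zero_nat, Eventually.of_forall hpos⟩
  have hnear : ∀ n, ∃ q ∈ S, dist (u + ts n • w) q < infDist (u + ts n • w) S + ts n ^ 2 :=
    fun n => (infDist_lt_iff ⟨u, hu⟩).1 (lt_add_of_pos_right _ (by positivity))
  choose q hqS hq using hnear
  refine ⟨fun n => (ts n)⁻¹ • (q n - u), ts, ?_, tendsto_nhds_of_tendsto_nhdsWithin hts, hpos,
    fun n => by simpa [smul_smul, (hpos n).ne'] using hqS n⟩
  have hbound : ∀ n, dist ((ts n)⁻¹ • (q n - u)) w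
      ≤ (ts n)⁻¹ * infDist (u + ts n • w) S + ts n := by
    intro n
    have hsplit : (ts n)⁻¹ • (q n - u) - w = (ts n)⁻¹ • (q n - (u + ts n • w)) := by
      rw [sub_add_eq_sub_sub, smul_sub (ts n)⁻¹ (q n - u), smul_smul,
        inv_mul_cancel₀ (hpos n).ne', one_smul]
    rw [dist_eq_norm, hsplit, norm_smul, norm_inv, Real.norm_of_nonneg (hpos n).le, norm_sub_rev,
      ← dist_eq_norm]
    calc (ts n)⁻¹ * dist (u + ts n • w) (q n)
        ≤ (ts n)⁻¹ * (infDist (u + ts n • w) S + ts n ^ 2) := by gcongr; exact (hq n).le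
      _ = (ts n)⁻¹ * infDist (u + ts n • w) S + ts n := by field_simp
  have hlim : Tendsto (fun n => (ts n)⁻¹ * infDist (u + ts n • w) S + ts n) atTop (𝓝 0) := by
    simpa using (h.comp hts).add (tendsto_nhds_of_tendsto_nhdsWithin hts)
  exact tendsto_iff_dist_tendsto_zero.2 (squeeze_zero (fun n => dist_nonneg) hbound hlim)

theorem mem_bouligand_preimage_of_eventually_mem {φ : X → Y} {A : Set Y} {u w : X} {κ : ℝ}
    (hd : DifferentiableAt ℝ φ u) (hu : φ u ∈ A)
    (hreg : ∀ᶠ z in 𝓝 (u, φ u), z.2 ∈ A → infDist z.1 (φ ⁻¹' A) ≤ κ * ‖φ z.1 - z.2‖)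
    (hdir : ∀ᶠ t in 𝓝[>] (0 : ℝ), φ u + t • fderiv ℝ φ u w ∈ A) :
    w ∈ bouligand (φ ⁻¹' A) u := by
  refine mem_bouligand_of_tendsto_infDist hu ?_
  have hpath : Tendsto (fun t : ℝ => (u + t • w, φ u + t • fderiv ℝ φ u w)) (𝓝[>] 0)
      (𝓝 (u, φ u)) := by
    have : Continuous fun t : ℝ => (u + t • w, φ u + t • fderiv ℝ φ u w) := by fun_prop
    exact tendsto_nhdsWithin_of_tendsto_nhds (by simpa using this.tendsto 0)
  have hslope : Tendsto (fun t : ℝ => ‖t⁻¹ • (φ (u + t • w) - φ u) - fderiv ℝ φ u w‖)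
      (𝓝[>] 0) (𝓝 0) := by
    have hline : HasDerivAt (fun t : ℝ => u + t • w) w 0 := by
      simpa using ((hasDerivAt_id (0 : ℝ)).smul_const w).const_add u
    have hderiv : HasDerivAt (fun t : ℝ => φ (u + t • w)) (fderiv ℝ φ u w) 0 := by
      exact hd.hasFDerivAt.comp_hasDerivAt_of_eq 0 hline (by simp)
    exact tendsto_iff_norm_sub_tendsto_zero.1 (by
      simpa using (hasDerivAt_iff_tendsto_slope_zero.1 hderiv).mono_left (nhdsGT_le_nhdsNE 0))
  refine squeeze_zero' ?_ ?_ (by simpa using hslope.const_mul κ)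
  · filter_upwards [self_mem_nhdsWithin] with t (ht : 0 < t)
    exact mul_nonneg (inv_nonneg.2 ht.le) infDist_nonneg
  · filter_upwards [hpath.eventually hreg, hdir, self_mem_nhdsWithin] with t hreg_t hdir_t
      (ht : 0 < t)
    have hsplit : t⁻¹ • (φ (u + t • w) - φ u) - fderiv ℝ φ u w
        = t⁻¹ • (φ (u + t • w) - (φ u + t • fderiv ℝ φ u w)) := by
      rw [← sub_sub, smul_sub t⁻¹ (φ (u + t • w) - φ u), smul_smul, inv_mul_cancel₀ ht.ne',
        one_smul]
    calc t⁻¹ * infDist (u + t • w) (φ ⁻¹' A)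
        ≤ t⁻¹ * (κ * ‖φ (u + t • w) - (φ u + t • fderiv ℝ φ u w)‖) := by
          gcongr; exact hreg_t hdir_t
      _ = κ * ‖t⁻¹ • (φ (u + t • w) - φ u) - fderiv ℝ φ u w‖ := by
          rw [hsplit, norm_smul, norm_inv, Real.norm_of_nonneg ht.le]; ring

theorem infDist_sub_bouligand_preimage_le {φ : X → Y} {C : PointedCone ℝ Y} {x u : X} {K κ : ℝ}
    (hd : DifferentiableAt ℝ φ u) (hx : φ x ∈ C) (hu : φ u ∈ C)
    (hsolv : BoundedlySurjOn (robinsonMap (fderiv ℝ φ u) (φ u)) (robinsonCone X C) K)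
    (hreg : ∀ᶠ z in 𝓝 (u, φ u), z.2 ∈ C → infDist z.1 (φ ⁻¹' C) ≤ κ * ‖φ z.1 - z.2‖) :
    infDist (x - u) (bouligand (φ ⁻¹' C) u) ≤ K * ‖φ x - φ u - fderiv ℝ φ u (x - u)‖ := by
  obtain ⟨⟨w, s, a⟩, hmem, hnorm, heq⟩ := hsolv (φ x - φ u - fderiv ℝ φ u (x - u))
  simp only [SetLike.mem_coe, mem_robinsonCone] at hmem
  obtain ⟨hs, ha⟩ := hmem
  rw [robinsonMap_apply] at heq
  have hline : ∀ t : ℝ, φ u + t • fderiv ℝ φ u (x - u + w)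
      = (1 - t * (1 + s)) • φ u + t • φ x + t • a := by
    intro t
    rw [map_add, show fderiv ℝ φ u w = φ x - φ u - fderiv ℝ φ u (x - u) - s • φ u + a by
      rw [← heq]; abel]
    module
  have htan : x - u + w ∈ bouligand (φ ⁻¹' C) u := by
    refine mem_bouligand_preimage_of_eventually_mem hd hu hreg ?_
    filter_upwards [Ioo_mem_nhdsGT (show (0 : ℝ) < (1 + s)⁻¹ by positivity)] with t ⟨ht0, ht1⟩
    have hcoef : 0 ≤ 1 - t * (1 + s) := by
      have : t * (1 + s) < (1 + s)⁻¹ * (1 + s) := by gcongr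
      rw [inv_mul_cancel₀ (by positivity)] at this
      linarith
    rw [hline]
    exact C.add_mem (C.add_mem (C.smul_mem hcoef hu) (C.smul_mem ht0.le hx)) (C.smul_mem ht0.le ha)
  calc infDist (x - u) (bouligand (φ ⁻¹' C) u) ≤ dist (x - u) (x - u + w) :=
        infDist_le_dist_of_mem htan
    _ = ‖(w, s, a).1‖ := by rw [dist_self_add_right]
    _ ≤ K * ‖φ x - φ u - fderiv ℝ φ u (x - u)‖ := (norm_fst_le _).trans hnorm

end Nonlinear

theorem shapiro_of_robinson {X Y : Type*}
    [NormedAddCommGroup X] [NormedSpace ℝ X] [CompleteSpace X]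
    [NormedAddCommGroup Y] [NormedSpace ℝ Y] [CompleteSpace Y]
    (φ : X → Y) (hφ : ContDiff ℝ 1 φ)
    (A : Set Y) (hAcl : IsClosed A) (hAconv : Convex ℝ A)
    (hAcone : ∀ c : ℝ, 0 < c → ∀ a ∈ A, c • a ∈ A)
    (xbar : X) (hxbar : xbar ∈ φ ⁻¹' A)
    (hRob : (0 : Y) ∈ interior {y | ∃ u : X, ∃ a ∈ A, y = φ xbar + fderiv ℝ φ xbar u - a}) :
    shapiro (φ ⁻¹' A) xbar := by
  obtain ⟨C, rfl⟩ := exists_pointedCone_coe_eq hAcl hAconv hAcone ⟨_, hxbar⟩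
  obtain ⟨K, hK, hsolv⟩ := eventually_boundedlySurjOn_robinsonMap hAcl hRob
  have hsolvφ : ∀ᶠ z in 𝓝 (xbar, φ xbar),
      BoundedlySurjOn (robinsonMap (fderiv ℝ φ z.1) z.2) (robinsonCone X C) K :=
    ((((hφ.continuous_fderiv one_ne_zero).comp continuous_fst).prodMk continuous_snd).tendsto
      (xbar, φ xbar)).eventually hsolv
  have hreg := eventually_infDist_preimage_le hφ hAcl hK hsolvφ
  have hgraph : Tendsto (fun u => (u, φ u)) (𝓝 xbar) (𝓝 (xbar, φ xbar)) :=
    (continuous_id.prodMk hφ.continuous).tendsto xbar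
  obtain ⟨δ₁, hδ₁, hnear⟩ := Metric.eventually_nhds_iff_ball.1
    ((hgraph.eventually hsolvφ).and (hgraph.eventually hreg.eventually_nhds))
  intro ε hε
  obtain ⟨δ₂, hδ₂, hlin⟩ := hφ.exists_ball_norm_sub_fderiv_le xbar (div_pos hε hK)
  refine ⟨min δ₁ δ₂, lt_min hδ₁ hδ₂, fun x ⟨hx, hxδ⟩ u ⟨hu, huδ⟩ => ?_⟩
  obtain ⟨hsolv_u, hreg_u⟩ := hnear u (ball_subset_ball (min_le_left _ _) huδ)
  calc infDist (x - u) (bouligand (φ ⁻¹' C) u)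
      ≤ K * ‖φ x - φ u - fderiv ℝ φ u (x - u)‖ :=
        infDist_sub_bouligand_preimage_le (hφ.differentiable one_ne_zero u) hx hu hsolv_u hreg_u
    _ ≤ K * (ε / K * ‖x - u‖) := by
        gcongr
        exact hlin u (ball_subset_ball (min_le_right _ _) huδ) x
          (ball_subset_ball (min_le_right _ _) hxδ)
    _ = ε * ‖x - u‖ := by field_simp
end
end

section
/- Let φ : X → Y be a mapping between Banach spaces and x̄ ∈ X. Suppose φ is Fréchet differentiable on a neighborhood of x̄ with derivative map x ↦ ∇φ(x) continuous at x̄, and the range ∇φ(x̄)(X) is nonmeager (of second Baire category) in Y. Then there exist μ, δ > 0 such that d(u, ∇φ(x)⁻¹(v)) ≤ μ‖∇φ(x)(u) − v‖ for all (x, u, v) ∈ B(x̄, δ) × X × Y. -/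
open Filter Metric Set Pointwise Topology
open scoped ENNReal

noncomputable section

/-!
If the range of a continuous linear map `f` is nonmeagre, some `closure (f '' ball 0 r)` has
interior, and taking differences and rescaling shows that every `y` is approximated within
`θ * ‖y‖` by some `f x` with `‖x‖ ≤ C * ‖y‖`, for every `θ > 0` and one `C`. Such approximate
surjectivity survives perturbations of `f` that are small compared with `1 / C`, and on a complete
domain iterating the approximation on the residuals yields exact preimages with
`‖x‖ ≤ C / (1 - θ) * ‖y‖`. Continuity of `D` at `xbar` makes this uniform near `xbar`.
-/

namespace ContinuousLinearMap

section NormedField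

variable {𝕜 X Y : Type*} [NontriviallyNormedField 𝕜]
  [NormedAddCommGroup X] [NormedSpace 𝕜 X] [NormedAddCommGroup Y] [NormedSpace 𝕜 Y]

def ApproxSurjective (f : X →L[𝕜] Y) (θ C : ℝ) : Prop :=
  ∀ y, ∃ x, ‖f x - y‖ ≤ θ * ‖y‖ ∧ ‖x‖ ≤ C * ‖y‖

theorem ApproxSurjective.of_norm_sub_le {f g : X →L[𝕜] Y} {θ C η : ℝ}
    (hf : f.ApproxSurjective θ C) (hgf : ‖g - f‖ ≤ η) : g.ApproxSurjective (θ + η * C) C := by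
  intro y
  obtain ⟨x, hfx, hx⟩ := hf y
  refine ⟨x, ?_, hx⟩
  have hη : 0 ≤ η := (norm_nonneg _).trans hgf
  calc ‖g x - y‖ = ‖(f x - y) + (g - f) x‖ := by rw [sub_apply]; abel_nf
    _ ≤ θ * ‖y‖ + η * (C * ‖y‖) := by
      refine norm_add_le_of_le hfx ?_
      exact ((g - f).le_opNorm x).trans (mul_le_mul hgf hx (norm_nonneg x) hη)
    _ = (θ + η * C) * ‖y‖ := by ring

theorem ApproxSurjective.exists_preimage_norm_le [CompleteSpace X] {f : X →L[𝕜] Y} {θ C : ℝ}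
    (hf : f.ApproxSurjective θ C) (hθ₀ : 0 ≤ θ) (hθ₁ : θ < 1) (hC : 0 ≤ C) (y : Y) :
    ∃ x, f x = y ∧ ‖x‖ ≤ C / (1 - θ) * ‖y‖ := by
  choose g hg using hf
  -- `r n` is what remains to be solved after `n` correction steps
  set r : ℕ → Y := fun n => (fun z => z - f (g z))^[n] y
  have hr_succ (n : ℕ) : r (n + 1) = r n - f (g (r n)) := Function.iterate_succ_apply' _ n y
  have hr (n : ℕ) : ‖r n‖ ≤ θ ^ n * ‖y‖ := by
    induction n with
    | zero => simp [r]
    | succ n ih =>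
      calc ‖r (n + 1)‖ = ‖f (g (r n)) - r n‖ := by rw [hr_succ, norm_sub_rev]
        _ ≤ θ * ‖r n‖ := (hg _).1
        _ ≤ θ * (θ ^ n * ‖y‖) := by gcongr
        _ = θ ^ (n + 1) * ‖y‖ := by ring
  have hu (n : ℕ) : ‖g (r n)‖ ≤ C * ‖y‖ * θ ^ n :=
    (hg _).2.trans <| by nlinarith [hr n, norm_nonneg y]
  have hgeom : HasSum (fun n => C * ‖y‖ * θ ^ n) (C * ‖y‖ * (1 - θ)⁻¹) :=
    (hasSum_geometric_of_lt_one hθ₀ hθ₁).mul_left _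
  have hsum : Summable fun n => g (r n) := .of_norm_bounded hgeom.summable hu
  refine ⟨∑' n, g (r n), ?_, ?_⟩
  · have hstep (n : ℕ) : f (g (r n)) = r n - r (n + 1) := by rw [hr_succ, sub_sub_cancel]
    have hpartial (N : ℕ) : ∑ n ∈ Finset.range N, f (g (r n)) = y - r N := by
      simp_rw [hstep]
      exact Finset.sum_range_sub' r N
    have hr_lim : Tendsto r atTop (𝓝 0) := by
      refine squeeze_zero_norm hr ?_
      simpa using (tendsto_pow_atTop_nhds_zero_of_lt_one hθ₀ hθ₁).mul_const ‖y‖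
    refine tendsto_nhds_unique (hsum.hasSum.mapL f).tendsto_sum_nat ?_
    simpa [hpartial] using tendsto_const_nhds.sub hr_lim
  · calc ‖∑' n, g (r n)‖ ≤ C * ‖y‖ * (1 - θ)⁻¹ := tsum_of_norm_bounded hgeom hu
      _ = C / (1 - θ) * ‖y‖ := by ring

theorem exists_nonempty_interior_closure_image_ball {f : X →L[𝕜] Y}
    (hf : ¬IsMeagre (range f)) : ∃ r > 0, (interior (closure (f '' ball 0 r))).Nonempty := by
  by_contra! h
  refine hf (IsMeagre.mono ?_ (isMeagre_iUnion fun n : ℕ ↦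
    IsNowhereDense.isMeagre (h (n + 1) n.cast_add_one_pos)))
  rintro _ ⟨x, rfl⟩
  obtain ⟨n, hn⟩ := exists_nat_gt ‖x‖
  exact mem_iUnion.2 ⟨n, x, mem_ball_zero_iff.2 (hn.trans (lt_add_one _)), rfl⟩

theorem ball_zero_subset_closure_image_ball {f : X →L[𝕜] Y} {a : Y} {ε r : ℝ}
    (h : ball a ε ⊆ closure (f '' ball 0 r)) : ball 0 ε ⊆ closure (f '' ball 0 (2 * r)) := by
  intro w hw
  rw [Metric.mem_closure_iff]
  intro δ hδ
  have ha : a ∈ ball a ε := mem_ball_self (pos_of_mem_ball hw)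
  have haw : a + w ∈ ball a ε := by simpa using hw
  obtain ⟨_, ⟨x₁, hx₁, rfl⟩, h₁⟩ := Metric.mem_closure_iff.1 (h haw) (δ / 2) (half_pos hδ)
  obtain ⟨_, ⟨x₂, hx₂, rfl⟩, h₂⟩ := Metric.mem_closure_iff.1 (h ha) (δ / 2) (half_pos hδ)
  rw [mem_ball_zero_iff] at hx₁ hx₂
  refine ⟨f (x₁ - x₂), ⟨x₁ - x₂, ?_, rfl⟩, ?_⟩
  · rw [mem_ball_zero_iff]
    linarith [norm_sub_le x₁ x₂]
  · calc dist w (f (x₁ - x₂)) = dist (a + w - a) (f x₁ - f x₂) := by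
          rw [add_sub_cancel_left, map_sub]
      _ ≤ dist (a + w) (f x₁) + dist a (f x₂) := dist_sub_sub_le _ _ _ _
      _ < δ := by linarith

theorem infEDist_preimage_singleton_le {f : X →L[𝕜] Y} {μ : ℝ}
    (hf : ∀ y, ∃ x, f x = y ∧ ‖x‖ ≤ μ * ‖y‖) (u : X) (v : Y) :
    infEDist u (f ⁻¹' {v}) ≤ ENNReal.ofReal (μ * ‖f u - v‖) := by
  obtain ⟨w, hw, hw_le⟩ := hf (f u - v)
  have hmem : u - w ∈ f ⁻¹' {v} := by simp [hw]
  calc infEDist u (f ⁻¹' {v}) ≤ edist u (u - w) := infEDist_le_edist_of_mem hmem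
    _ = ENNReal.ofReal ‖w‖ := by rw [edist_dist, dist_eq_norm, sub_sub_cancel]
    _ ≤ ENNReal.ofReal (μ * ‖f u - v‖) := ENNReal.ofReal_le_ofReal hw_le

end NormedField

section RCLike

variable {𝕜 X Y : Type*} [RCLike 𝕜]
  [NormedAddCommGroup X] [NormedSpace 𝕜 X] [NormedAddCommGroup Y] [NormedSpace 𝕜 Y]

theorem approxSurjective_of_ball_subset_closure_image_ball {f : X →L[𝕜] Y} {ε r θ : ℝ}
    (hε : 0 < ε) (h : ball 0 ε ⊆ closure (f '' ball 0 r)) (hθ : 0 < θ) :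
    f.ApproxSurjective θ (2 * r / ε) := by
  intro y
  rcases eq_or_ne y 0 with rfl | hy
  · exact ⟨0, by simp⟩
  have hy' : 0 < ‖y‖ := norm_pos_iff.2 hy
  set t : ℝ := ε / (2 * ‖y‖)
  have ht : 0 < t := by positivity
  have hty : (t : 𝕜) • y ∈ ball 0 ε := by
    rw [mem_ball_zero_iff, norm_smul, RCLike.norm_ofReal, abs_of_pos ht]
    calc t * ‖y‖ = ε / 2 := by simp only [t]; field_simp
      _ < ε := half_lt_self hε
  obtain ⟨_, ⟨x, hx, rfl⟩, hfx⟩ :=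
    Metric.mem_closure_iff.1 (h hty) (t * (θ * ‖y‖)) (by positivity)
  rw [mem_ball_zero_iff] at hx
  rw [dist_comm, dist_eq_norm] at hfx
  refine ⟨(t : 𝕜)⁻¹ • x, ?_, ?_⟩
  · have : f ((t : 𝕜)⁻¹ • x) - y = (t : 𝕜)⁻¹ • (f x - (t : 𝕜) • y) := by
      rw [map_smul, smul_sub, inv_smul_smul₀ (by exact_mod_cast ht.ne')]
    rw [this, norm_smul, norm_inv, RCLike.norm_ofReal, abs_of_pos ht]
    calc t⁻¹ * ‖f x - (t : 𝕜) • y‖ ≤ t⁻¹ * (t * (θ * ‖y‖)) := by gcongr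
      _ = θ * ‖y‖ := by field_simp
  · rw [norm_smul, norm_inv, RCLike.norm_ofReal, abs_of_pos ht]
    calc t⁻¹ * ‖x‖ ≤ t⁻¹ * r := by gcongr
      _ = 2 * r / ε * ‖y‖ := by simp only [t]; field_simp

theorem exists_approxSurjective_of_not_isMeagre_range {f : X →L[𝕜] Y}
    (hf : ¬IsMeagre (range f)) : ∃ C > 0, ∀ θ > 0, f.ApproxSurjective θ C := by
  obtain ⟨r, hr, a, ha⟩ := exists_nonempty_interior_closure_image_ball hf
  obtain ⟨ε, hε, hball⟩ := Metric.mem_nhds_iff.1 (mem_interior_iff_mem_nhds.1 ha)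
  exact ⟨2 * (2 * r) / ε, by positivity, fun θ hθ ↦
    approxSurjective_of_ball_subset_closure_image_ball hε
      (ball_zero_subset_closure_image_ball hball) hθ⟩

end RCLike

end ContinuousLinearMap

theorem uniform_linear_metric_estimate_of_nonmeager_range_general {X Y : Type*}
    [NormedAddCommGroup X] [NormedSpace ℝ X] [CompleteSpace X]
    [NormedAddCommGroup Y] [NormedSpace ℝ Y]
    (xbar : X) (D : X → X →L[ℝ] Y)
    (hcont : ContinuousAt D xbar)
    (hnm : ¬ IsMeagre (Set.range (D xbar))) :
    ∃ μ > (0 : ℝ), ∃ δ > (0 : ℝ), ∀ x ∈ ball xbar δ, ∀ (u : X) (v : Y),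
      EMetric.infEdist u (⇑(D x) ⁻¹' {v}) ≤ ENNReal.ofReal (μ * ‖D x u - v‖) := by
  obtain ⟨C, hC, happrox⟩ := ContinuousLinearMap.exists_approxSurjective_of_not_isMeagre_range hnm
  -- a perturbation of size `1 / (4 * C)` turns the error `1 / 4` into `1 / 2`
  obtain ⟨δ, hδ, hnear⟩ := Metric.continuousAt_iff.1 hcont (1 / (4 * C)) (by positivity)
  refine ⟨2 * C, by positivity, δ, hδ, fun x hx ↦
    ContinuousLinearMap.infEDist_preimage_singleton_le fun y ↦ ?_⟩
  have hx' : (D x).ApproxSurjective (1 / 4 + 1 / (4 * C) * C) C :=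
    (happrox (1 / 4) (by norm_num)).of_norm_sub_le (by simpa [dist_eq_norm] using (hnear hx).le)
  have hhalf : 1 / 4 + 1 / (4 * C) * C = 1 / 2 := by field_simp; norm_num
  rw [hhalf] at hx'
  obtain ⟨w, hw, hw_le⟩ := hx'.exists_preimage_norm_le (by norm_num) (by norm_num) hC.le y
  exact ⟨w, hw, hw_le.trans_eq (by ring)⟩

theorem uniform_linear_metric_estimate_of_nonmeager_range {X Y : Type*}
    [NormedAddCommGroup X] [NormedSpace ℝ X] [CompleteSpace X]
    [NormedAddCommGroup Y] [NormedSpace ℝ Y] [CompleteSpace Y]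
    (φ : X → Y) (xbar : X) (D : X → X →L[ℝ] Y)
    (hdiff : ∀ᶠ x in 𝓝 xbar, HasFDerivAt φ (D x) x)
    (hcont : ContinuousAt D xbar)
    (hnm : ¬ IsMeagre (Set.range (D xbar))) :
    ∃ μ > (0 : ℝ), ∃ δ > (0 : ℝ), ∀ x ∈ ball xbar δ, ∀ (u : X) (v : Y),
      EMetric.infEdist u (⇑(D x) ⁻¹' {v}) ≤ ENNReal.ofReal (μ * ‖D x u - v‖) :=
  uniform_linear_metric_estimate_of_nonmeager_range_general xbar D hcont hnm
end
end

section
/- Let φ : X → Y be a mapping between Banach spaces, A a closed subset of Y, and x̄ ∈ φ⁻¹(A). Suppose φ is Fréchet differentiable on a neighborhood of x̄ and metrically regular around x̄. Then there exists δ > 0 such that T^B(φ⁻¹(A), x) = ∇φ(x)⁻¹(T^B(A, φ(x))) for all x ∈ B(x̄, δ) ∩ φ⁻¹(A). -/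
open Filter Metric Set Pointwise Topology Asymptotics
open scoped ENNReal

noncomputable section

/-- Difference quotients along Hadamard-type sequences converge to the derivative. -/
lemma diffQuot {X Y : Type*} [NormedAddCommGroup X] [NormedSpace ℝ X]
    [NormedAddCommGroup Y] [NormedSpace ℝ Y]
    (φ : X → Y) (f : X →L[ℝ] Y) (x : X) (hf : HasFDerivAt φ f x)
    (ts : ℕ → ℝ) (hts0 : Tendsto ts atTop (𝓝 0)) (htspos : ∀ n, 0 < ts n)
    (us : ℕ → X) (u : X) (hus : Tendsto us atTop (𝓝 u)) :
    Tendsto (fun n => (ts n)⁻¹ • (φ (x + ts n • us n) - φ x)) atTop (𝓝 (f u)) := by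
  have hlo := hasFDerivAt_iff_isLittleO_nhds_zero.mp hf
  have hh : Tendsto (fun n => ts n • us n) atTop (𝓝 0) := by
    have := hts0.smul hus
    simpa using this
  have r : (fun n => φ (x + ts n • us n) - φ x - f (ts n • us n)) =o[atTop]
      (fun n => ts n • us n) := hlo.comp_tendsto hh
  have hOB : (fun n => ts n • us n) =O[atTop] ts := by
    have h1 : us =O[atTop] (fun _ => (1:ℝ)) := hus.isBigO_one ℝ
    have := (isBigO_refl ts atTop).smul h1
    simpa using this
  have r' := (r.trans_isBigO hOB).tendsto_inv_smul_nhds_zero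
  have key : ∀ n, (ts n)⁻¹ • (φ (x + ts n • us n) - φ x - f (ts n • us n)) + f (us n)
      = (ts n)⁻¹ • (φ (x + ts n • us n) - φ x) := by
    intro n
    have hne : ts n ≠ 0 := (htspos n).ne'
    rw [f.map_smul, smul_sub, inv_smul_smul₀ hne]
    abel
  have hfc : Tendsto (fun n => f (us n)) atTop (𝓝 (f u)) :=
    (f.continuous.tendsto u).comp hus
  have := r'.add hfc
  simp only [zero_add] at this
  simpa only [key] using this

theorem tangent_cone_preimage_of_metReg {X Y : Type*}
    [NormedAddCommGroup X] [NormedSpace ℝ X] [CompleteSpace X]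
    [NormedAddCommGroup Y] [NormedSpace ℝ Y] [CompleteSpace Y]
    (φ : X → Y) (A : Set Y) (hAcl : IsClosed A)
    (xbar : X) (hxbar : xbar ∈ φ ⁻¹' A)
    (D : X → X →L[ℝ] Y) (hdiff : ∀ᶠ x in 𝓝 xbar, HasFDerivAt φ (D x) x)
    (hmr : metReg φ xbar) :
    ∃ δ > (0 : ℝ), ∀ x ∈ ball xbar δ ∩ φ ⁻¹' A,
      bouligand (φ ⁻¹' A) x = ⇑(D x) ⁻¹' (bouligand A (φ x)) := by
  obtain ⟨κ, hκ, U, hU, V, hV, H⟩ := hmr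
  obtain ⟨rU, hrU, hrUsub⟩ := Metric.mem_nhds_iff.mp hU
  obtain ⟨rV, hrV, hrVsub⟩ := Metric.mem_nhds_iff.mp hV
  have hdx0 : HasFDerivAt φ (D xbar) xbar := hdiff.self_of_nhds
  have hcont : ContinuousAt φ xbar := hdx0.continuousAt
  have hs : {x | HasFDerivAt φ (D x) x} ∩ ball xbar rU ∩ φ ⁻¹' (ball (φ xbar) rV) ∈ 𝓝 xbar := by
    refine Filter.inter_mem (Filter.inter_mem hdiff (ball_mem_nhds _ hrU)) ?_
    exact hcont (ball_mem_nhds _ hrV)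
  obtain ⟨δ, hδ, hδsub⟩ := Metric.mem_nhds_iff.mp hs
  refine ⟨δ, hδ, ?_⟩
  rintro x ⟨hxball, hxA⟩
  obtain ⟨⟨hdx, hxU⟩, hφx⟩ := hδsub hxball
  ext v
  constructor
  · rintro ⟨vs, ts, hvs, hts0, htsp, hmem⟩
    refine ⟨fun n => (ts n)⁻¹ • (φ (x + ts n • vs n) - φ x), ts,
      diffQuot φ (D x) x hdx ts hts0 htsp vs v hvs, hts0, htsp, ?_⟩
    intro n
    have hne : ts n ≠ 0 := (htsp n).ne'
    have heq : φ x + ts n • ((ts n)⁻¹ • (φ (x + ts n • vs n) - φ x))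
        = φ (x + ts n • vs n) := by
      rw [smul_inv_smul₀ hne]; abel
    rw [heq]
    exact hmem n
  · rintro ⟨ws, ts, hws, hts0, htsp, hmem⟩
    set y : ℕ → Y := fun n => φ x + ts n • ws n with hy_def
    set xs : ℕ → X := fun n => x + ts n • v with hxs_def
    have hy : Tendsto y atTop (𝓝 (φ x)) := by
      have h := hts0.smul hws
      rw [zero_smul] at h
      have h2 : Tendsto y atTop (𝓝 (φ x + 0)) := Tendsto.add tendsto_const_nhds h
      rwa [add_zero] at h2
    have hxs : Tendsto xs atTop (𝓝 x) := by
      have h : Tendsto (fun n => ts n • v) atTop (𝓝 ((0:ℝ) • v)) :=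
        hts0.smul tendsto_const_nhds
      rw [zero_smul] at h
      have h2 : Tendsto xs atTop (𝓝 (x + 0)) := Tendsto.add tendsto_const_nhds h
      rwa [add_zero] at h2
    have hq1 : Tendsto (fun n => (ts n)⁻¹ • (φ (xs n) - φ x)) atTop (𝓝 (D x v)) :=
      diffQuot φ (D x) x hdx ts hts0 htsp (fun _ => v) v tendsto_const_nhds
    have he : Tendsto (fun n => (ts n)⁻¹ • (φ (xs n) - y n)) atTop (𝓝 0) := by
      have h2 := hq1.sub hws
      rw [sub_self] at h2
      have key : ∀ n, (ts n)⁻¹ • (φ (xs n) - y n) = (ts n)⁻¹ • (φ (xs n) - φ x) - ws n := by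
        intro n
        have hne : ts n ≠ 0 := (htsp n).ne'
        have heq2 : φ (xs n) - y n = (φ (xs n) - φ x) - ts n • ws n := by
          simp only [hy_def]; abel
        rw [heq2, smul_sub, inv_smul_smul₀ hne]
      simpa only [key] using h2
    have henorm : Tendsto (fun n => (ts n)⁻¹ * ‖φ (xs n) - y n‖) atTop (𝓝 0) := by
      have := he.norm
      rw [norm_zero] at this
      have key : ∀ n, ‖(ts n)⁻¹ • (φ (xs n) - y n)‖ = (ts n)⁻¹ * ‖φ (xs n) - y n‖ := by
        intro n
        rw [norm_smul, Real.norm_eq_abs, abs_of_pos (inv_pos.mpr (htsp n))]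
      simpa only [key] using this
    have h1 : ∀ᶠ n in atTop, xs n ∈ ball xbar rU :=
      hxs.eventually (isOpen_ball.eventually_mem hxU)
    have h2 : ∀ᶠ n in atTop, y n ∈ ball (φ xbar) rV :=
      hy.eventually (isOpen_ball.eventually_mem hφx)
    obtain ⟨N, hN⟩ := eventually_atTop.mp (h1.and h2)
    have hz : ∀ n : ℕ, ∃ z, φ z = y (n + N) ∧
        dist (xs (n + N)) z < κ * ‖φ (xs (n + N)) - y (n + N)‖
          + ts (n + N) * (1 / ((n : ℝ) + N + 1)) := by
      intro n
      obtain ⟨hin, hyn⟩ := hN (n + N) (Nat.le_add_left N n)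
      have hmr' := H _ (hrUsub hin) _ (hrVsub hyn)
      have hpos : (0:ℝ) < ts (n + N) * (1 / ((n : ℝ) + N + 1)) :=
        mul_pos (htsp (n + N)) (by positivity)
      have hb : ENNReal.ofReal (κ * ‖φ (xs (n + N)) - y (n + N)‖)
          < ENNReal.ofReal (κ * ‖φ (xs (n + N)) - y (n + N)‖
            + ts (n + N) * (1 / ((n : ℝ) + N + 1))) := by
        have hnn : (0:ℝ) ≤ κ * ‖φ (xs (n + N)) - y (n + N)‖ := by positivity
        rw [ENNReal.ofReal_lt_ofReal_iff (by linarith)]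
        linarith
      have hlt := lt_of_le_of_lt hmr' hb
      obtain ⟨z, hz1, hz2⟩ := EMetric.infEdist_lt_iff.mp hlt
      exact ⟨z, hz1, edist_lt_ofReal.mp hz2⟩
    choose z hz1 hz2 using hz
    set Q : ℕ → ℝ := fun m => κ * ((ts m)⁻¹ * ‖φ (xs m) - y m‖) + 1 / ((m : ℝ) + 1) with hQdef
    have hQ : Tendsto Q atTop (𝓝 0) := by
      have hc : Tendsto (fun m : ℕ => κ * ((ts m)⁻¹ * ‖φ (xs m) - y m‖)) atTop (𝓝 (κ * 0)) :=
        tendsto_const_nhds.mul henorm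
      rw [mul_zero] at hc
      have h3 := hc.add tendsto_one_div_add_atTop_nhds_zero_nat
      rw [add_zero] at h3
      exact h3
    refine ⟨fun n => (ts (n + N))⁻¹ • (z n - x), fun n => ts (n + N), ?_, ?_, ?_, ?_⟩
    · have hbnd : ∀ n, ‖(ts (n + N))⁻¹ • (z n - x) - v‖ ≤ Q (n + N) := by
        intro n
        have hne : ts (n + N) ≠ 0 := (htsp (n + N)).ne'
        have heq : (ts (n + N))⁻¹ • (z n - xs (n + N)) = (ts (n + N))⁻¹ • (z n - x) - v := by
          have heq2 : z n - xs (n + N) = (z n - x) - ts (n + N) • v := by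
            simp only [hxs_def]; abel
          rw [heq2, smul_sub, inv_smul_smul₀ hne]
        rw [← heq, norm_smul, Real.norm_eq_abs, abs_of_pos (inv_pos.mpr (htsp (n + N)))]
        have hd : ‖z n - xs (n + N)‖ = dist (xs (n + N)) (z n) := by
          rw [dist_eq_norm, ← norm_neg]; congr 1; abel
        rw [hd]
        have hle := (hz2 n).le
        have htp := htsp (n + N)
        have hQn : Q (n + N) = (ts (n + N))⁻¹ * (κ * ‖φ (xs (n + N)) - y (n + N)‖
            + ts (n + N) * (1 / ((n : ℝ) + N + 1))) := by
          simp only [hQdef]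
          push_cast
          field_simp
        rw [hQn]
        exact mul_le_mul_of_nonneg_left hle (le_of_lt (inv_pos.mpr htp))
      have h0 : Tendsto (fun n => (ts (n + N))⁻¹ • (z n - x) - v) atTop (𝓝 0) :=
        squeeze_zero_norm hbnd (hQ.comp (tendsto_add_atTop_nat N))
      exact tendsto_sub_nhds_zero_iff.mp h0
    · exact hts0.comp (tendsto_add_atTop_nat N)
    · exact fun n => htsp (n + N)
    · intro n
      have hne : ts (n + N) ≠ 0 := (htsp (n + N)).ne'
      have heq : x + ts (n + N) • ((ts (n + N))⁻¹ • (z n - x)) = z n := by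
        rw [smul_inv_smul₀ hne]; abel
      rw [Set.mem_preimage, heq, hz1 n]
      exact hmem (n + N)
end
end

section
/- Let X be a Banach space, φ : X → ℝ∪{+∞} a proper lower semicontinuous function, S_φ := {x ∈ X : φ(x) ≤ 0}, and x̄ ∈ S_φ. Suppose there exists r₀ > 0 such that S_φ has the Shapiro first order contact property at every point of S_φ ∩ B(x̄, r₀), and the inequality φ(x) ≤ 0 has a local error bound at x̄ with constants τ, δ > 0. Then there exists r > 0 such that e({h ∈ X : φ'_H(x; h) ≤ 1}, T^B(S_φ, x)) ≤ τ for all x ∈ S_φ ∩ B(x̄, r) with φ(x) = 0. -/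
open Filter Metric Set Pointwise Topology
open scoped ENNReal

noncomputable section

/-! If the lower Hadamard derivative of `φ` at `x` in direction `h` is at most `1`, there are
arbitrarily small `t > 0` and `h'` near `h` with `φ (x + t h') ≤ (1 + o(1)) t`, so the error bound
puts a point `u ∈ S` within `(τ + o(1)) t` of `x + t h`. The Shapiro property at `x` places `u - x`
within `o(t)` of the cone `T^B(S, x)`; dividing by `t`, `h` lies within `τ + o(1)` of the cone. -/

lemma excess_le_ofReal {α : Type*} [PseudoMetricSpace α] {C D : Set α} (hD : D.Nonempty) {ρ : ℝ}
    (h : ∀ c ∈ C, infDist c D ≤ ρ) : excess C D ≤ ENNReal.ofReal ρ :=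
  iSup₂_le fun c hc ↦ by
    show infEDist c D ≤ _
    rw [← ENNReal.ofReal_toReal (infEDist_ne_top hD)]
    exact ENNReal.ofReal_le_ofReal (h c hc)

section

variable {X : Type*} [NormedAddCommGroup X] [NormedSpace ℝ X]

lemma smul_mem_bouligand {A : Set X} {u v : X} (hv : v ∈ bouligand A u) {c : ℝ} (hc : 0 < c) :
    c • v ∈ bouligand A u := by
  obtain ⟨vs, ts, hvs, hts, hpos, hmem⟩ := hv
  refine ⟨fun n ↦ c • vs n, fun n ↦ ts n / c, hvs.const_smul c, by simpa using hts.div_const c,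
    fun n ↦ div_pos (hpos n) hc, fun n ↦ ?_⟩
  rw [smul_smul, div_mul_cancel₀ _ hc.ne']
  exact hmem n

lemma smul_bouligand {A : Set X} {u : X} {c : ℝ} (hc : 0 < c) :
    c • bouligand A u = bouligand A u := by
  refine (smul_set_subset_iff.2 fun v hv ↦ smul_mem_bouligand hv hc).antisymm fun v hv ↦ ?_
  rw [mem_smul_set_iff_inv_smul_mem₀ hc.ne']
  exact smul_mem_bouligand hv (inv_pos.2 hc)

lemma infDist_smul_bouligand {A : Set X} {u : X} (v : X) {c : ℝ} (hc : 0 < c) :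
    infDist (c • v) (bouligand A u) = c * infDist v (bouligand A u) := by
  have := infDist_smul₀ hc.ne' (bouligand A u) v
  rwa [smul_bouligand hc, Real.norm_of_nonneg hc.le] at this

lemma EReal.le_coe_add_mul_of_mul_sub_lt {b : EReal} {a c t : ℝ} (ht : 0 < t)
    (h : ((1 / t : ℝ) : EReal) * (b - a) < c) : b ≤ ((a + c * t : ℝ) : EReal) := by
  induction b using EReal.rec with
  | bot => exact bot_le
  | top =>
    rw [EReal.top_sub_coe, EReal.coe_mul_top_of_pos (by positivity)] at h
    exact absurd h not_top_lt
  | coe b =>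
    norm_cast at h ⊢
    rw [one_div_mul_eq_div, div_lt_iff₀ ht] at h
    linarith

lemma frequently_le_of_hadamardDeriv_lt {φ : X → EReal} {x h : X} {a c : ℝ} (hφx : φ x = a)
    (hlt : hadamardDeriv φ x h < c) :
    ∃ᶠ p in (𝓝[>] (0 : ℝ)) ×ˢ 𝓝 h, φ (x + p.1 • p.2) ≤ ((a + c * p.1 : ℝ) : EReal) := by
  have hpos : ∀ᶠ p : ℝ × X in (𝓝[>] (0 : ℝ)) ×ˢ 𝓝 h, 0 < p.1 :=
    eventually_mem_nhdsWithin.prod_inl _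
  refine ((frequently_lt_of_liminf_lt (by isBoundedDefault) hlt).and_eventually hpos).mono ?_
  rintro p ⟨hq, hp⟩
  rw [hφx] at hq
  exact EReal.le_coe_add_mul_of_mul_sub_lt hp hq

/-- `ApproxTangent S x h ρ` says `liminf_{t → 0⁺} d(x + t h, S) / t ≤ ρ`. -/
def ApproxTangent (S : Set X) (x h : X) (ρ : ℝ) : Prop :=
  ∀ η > 0, ∃ t ∈ Ioo 0 η, infDist (x + t • h) S < (ρ + η) * t

theorem ApproxTangent.infDist_bouligand_le {S : Set X} {x h : X} {ρ : ℝ}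
    (happ : ApproxTangent S x h ρ) (hρ : 0 ≤ ρ) (hx : x ∈ S) (hsh : shapiro S x) :
    infDist h (bouligand S x) ≤ ρ := by
  set K := ‖h‖ + ρ + 1
  have hK : 0 < K := by positivity
  have hbound : ∀ ε ∈ Ioo (0 : ℝ) 1, infDist h (bouligand S x) ≤ ρ + ε * (K + 1) := by
    rintro ε ⟨hε, hε1⟩
    obtain ⟨δ₁, hδ₁, hsh⟩ := hsh ε hε
    obtain ⟨t, ⟨ht, htη⟩, hdist⟩ := happ (min ε (δ₁ / K)) (by positivity)
    obtain ⟨u, hu, hyu⟩ := (infDist_lt_iff ⟨x, hx⟩).1 hdist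
    have hyu' : dist (x + t • h) u ≤ (ρ + ε) * t := by
      refine hyu.le.trans (by gcongr; exact min_le_left _ _)
    have hux : ‖u - x‖ ≤ t * K := calc
      ‖u - x‖ = ‖t • h - (x + t • h - u)‖ := by congr 1; abel
      _ ≤ ‖t • h‖ + dist (x + t • h) u := by rw [dist_eq_norm]; exact norm_sub_le _ _
      _ ≤ t * ‖h‖ + (ρ + 1) * t := by
        rw [norm_smul, Real.norm_of_nonneg ht.le]
        gcongr
        exact hyu'.trans (by gcongr)
      _ = t * K := by ring
    have huδ : u ∈ ball x δ₁ := by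
      rw [mem_ball, dist_eq_norm]
      calc ‖u - x‖ ≤ t * K := hux
        _ < δ₁ / K * K := by gcongr; exact htη.trans_le (min_le_right _ _)
        _ = δ₁ := div_mul_cancel₀ _ hK.ne'
    have hux' : infDist (u - x) (bouligand S x) ≤ ε * (t * K) :=
      (hsh u ⟨hu, huδ⟩ x ⟨hx, mem_ball_self hδ₁⟩).trans (by gcongr)
    have hscale : h - t⁻¹ • (u - x) = t⁻¹ • (x + t • h - u) := by
      simp only [smul_sub, smul_add, smul_smul, inv_mul_cancel₀ ht.ne', one_smul]
      abel
    calc infDist h (bouligand S x)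
        ≤ infDist (t⁻¹ • (u - x)) (bouligand S x) + dist h (t⁻¹ • (u - x)) :=
          infDist_le_infDist_add_dist
      _ = t⁻¹ * infDist (u - x) (bouligand S x) + t⁻¹ * dist (x + t • h) u := by
          rw [infDist_smul_bouligand _ (inv_pos.2 ht), dist_eq_norm, hscale, norm_smul,
            Real.norm_of_nonneg (inv_pos.2 ht).le, dist_eq_norm]
      _ ≤ t⁻¹ * (ε * (t * K)) + t⁻¹ * ((ρ + ε) * t) := by gcongr
      _ = ρ + ε * (K + 1) := by field_simp; ring
  have hlim : Tendsto (fun ε : ℝ ↦ ρ + ε * (K + 1)) (𝓝[>] 0) (𝓝 ρ) := by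
    have : Continuous fun ε : ℝ ↦ ρ + ε * (K + 1) := by fun_prop
    simpa using (this.tendsto 0).mono_left nhdsWithin_le_nhds
  exact ge_of_tendsto hlim (eventually_of_mem (Ioo_mem_nhdsGT one_pos) hbound)

theorem approxTangent_of_hadamardDeriv_le {φ : X → EReal} {S U : Set X} {x h : X} {τ c : ℝ}
    (hτ : 0 < τ) (hc : 0 ≤ c) (hU : U ∈ 𝓝 x)
    (heb : ∀ y ∈ U, ((infDist y S : ℝ) : EReal) ≤ (τ : EReal) * max (φ y) 0)
    (hφx : φ x = 0) (hh : hadamardDeriv φ x h ≤ c) : ApproxTangent S x h (τ * c) := by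
  intro η hη
  set c' := c + η / (2 * τ)
  have hlt : hadamardDeriv φ x h < c' :=
    hh.trans_lt (EReal.coe_lt_coe_iff.2 (lt_add_of_pos_right c (by positivity)))
  have hmove : Tendsto (fun p : ℝ × X ↦ x + p.1 • p.2) ((𝓝[>] 0) ×ˢ 𝓝 h) (𝓝 x) := by
    have : Continuous fun p : ℝ × X ↦ x + p.1 • p.2 := by fun_prop
    have h0 := this.tendsto (0, h)
    rw [nhds_prod_eq] at h0
    simpa using h0.mono_left (Filter.prod_mono nhdsWithin_le_nhds le_rfl)
  have hnear : ∀ᶠ p : ℝ × X in (𝓝[>] 0) ×ˢ 𝓝 h,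
      p.1 ∈ Ioo 0 η ∧ dist p.2 h < η / 4 ∧ x + p.1 • p.2 ∈ U :=
    (Eventually.prod_inl (Ioo_mem_nhdsGT hη) _).and
      ((Eventually.prod_inr (ball_mem_nhds h (by positivity)) _).and (hmove.eventually hU))
  obtain ⟨⟨t, h'⟩, hφ, ⟨ht, htη⟩, hh', hy⟩ :=
    ((frequently_le_of_hadamardDeriv_lt (a := 0) (by simpa using hφx) hlt).and_eventually
      hnear).exists
  dsimp only at hφ ht htη hh' hy
  refine ⟨t, ⟨ht, htη⟩, ?_⟩
  have hmax : max (φ (x + t • h')) 0 ≤ ((c' * t : ℝ) : EReal) :=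
    max_le (by simpa using hφ) (by exact_mod_cast (by positivity : 0 ≤ c' * t))
  have heb' : infDist (x + t • h') S ≤ τ * (c' * t) := by
    have := (heb _ hy).trans (mul_le_mul_of_nonneg_left hmax (by exact_mod_cast hτ.le))
    exact_mod_cast this
  have hmove' : dist (x + t • h) (x + t • h') ≤ t * (η / 4) := by
    rw [dist_add_left, dist_smul₀, Real.norm_of_nonneg ht.le, dist_comm]
    gcongr
  calc infDist (x + t • h) S
      ≤ infDist (x + t • h') S + dist (x + t • h) (x + t • h') := infDist_le_infDist_add_dist
    _ ≤ τ * c * t + η / 2 * t + η / 4 * t := by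
      have : τ * (c' * t) = τ * c * t + η / 2 * t := by simp only [c']; field_simp
      linarith
    _ < (τ * c + η) * t := by nlinarith [mul_pos hη ht]

end

theorem excess_le_of_error_bound_general {X : Type*} [NormedAddCommGroup X] [NormedSpace ℝ X]
    (φ : X → EReal)
    (S : Set X) (xbar : X)
    (r₀ : ℝ) (hr₀ : 0 < r₀) (hshap : ∀ z ∈ S ∩ ball xbar r₀, shapiro S z)
    (τ δ : ℝ) (hτ : 0 < τ) (hδ : 0 < δ)
    (heb : ∀ x ∈ ball xbar δ, ((infDist x S : ℝ) : EReal) ≤ (τ : EReal) * max (φ x) 0) :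
    ∃ r > (0 : ℝ), ∀ x ∈ S ∩ ball xbar r, φ x = 0 →
      excess {h | hadamardDeriv φ x h ≤ 1} (bouligand S x) ≤ ENNReal.ofReal τ := by
  refine ⟨min r₀ δ, lt_min hr₀ hδ, fun x ⟨hxS, hx⟩ hφx ↦
    excess_le_ofReal ⟨0, zero_mem_bouligand hxS⟩ fun h hh ↦ ?_⟩
  have hU : ball xbar δ ∈ 𝓝 x := isOpen_ball.mem_nhds (ball_subset_ball (min_le_right _ _) hx)
  have happ : ApproxTangent S x h τ := by
    simpa using approxTangent_of_hadamardDeriv_le (c := 1) hτ zero_le_one hU heb hφx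
      (by simpa using hh)
  exact happ.infDist_bouligand_le hτ.le hxS (hshap x ⟨hxS, ball_subset_ball (min_le_left _ _) hx⟩)

theorem excess_le_of_error_bound {X : Type*} [NormedAddCommGroup X] [NormedSpace ℝ X]
    [CompleteSpace X]
    (φ : X → EReal) (hlsc : LowerSemicontinuous φ) (hbot : ∀ x, φ x ≠ ⊥)
    (hproper : ∃ x, φ x ≠ ⊤)
    (S : Set X) (hS : S = {x | φ x ≤ 0}) (xbar : X) (hxbar : xbar ∈ S)
    (r₀ : ℝ) (hr₀ : 0 < r₀) (hshap : ∀ z ∈ S ∩ ball xbar r₀, shapiro S z)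
    (τ δ : ℝ) (hτ : 0 < τ) (hδ : 0 < δ)
    (heb : ∀ x ∈ ball xbar δ, ((infDist x S : ℝ) : EReal) ≤ (τ : EReal) * max (φ x) 0) :
    ∃ r > (0 : ℝ), ∀ x ∈ S ∩ ball xbar r, φ x = 0 →
      excess {h | hadamardDeriv φ x h ≤ 1} (bouligand S x) ≤ ENNReal.ofReal τ :=
  excess_le_of_error_bound_general φ S xbar r₀ hr₀ hshap τ δ hτ hδ heb
end
end

section
/- Let X be a Banach space, φ : X → ℝ∪{+∞} a proper lower semicontinuous function, S_φ := {x ∈ X : φ(x) ≤ 0}, and let x ∈ X satisfy φ(x) = 0. Then {h ∈ X : φ'_H(x; h) < 0} ⊆ T^B(S_φ, x) ⊆ {h ∈ X : φ'_H(x; h) ≤ 0}. -/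
open Filter Metric Set Pointwise Topology
open scoped ENNReal

noncomputable section

theorem hadamard_sublevel_tangent_cone_inclusions {X : Type*} [NormedAddCommGroup X]
    [NormedSpace ℝ X] [CompleteSpace X]
    (φ : X → EReal) (hlsc : LowerSemicontinuous φ) (hbot : ∀ x, φ x ≠ ⊥)
    (hproper : ∃ x, φ x ≠ ⊤)
    (S : Set X) (hS : S = {x | φ x ≤ 0}) (x : X) (hx : φ x = 0) :
    {h : X | hadamardDeriv φ x h < 0} ⊆ bouligand S x ∧
      bouligand S x ⊆ {h : X | hadamardDeriv φ x h ≤ 0} := by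
  constructor
  · intro h hh
    simp only [Set.mem_setOf_eq, hadamardDeriv] at hh
    have hfreq : ∃ᶠ p : ℝ × X in (𝓝[>] (0:ℝ)) ×ˢ 𝓝 h,
        (((1:ℝ)/p.1 : ℝ) : EReal) * (φ (x + p.1 • p.2) - φ x) < 0 :=
      frequently_lt_of_liminf_lt (by isBoundedDefault) hh
    have key : ∀ n : ℕ, ∃ p : ℝ × X, p.1 ∈ Set.Ioo (0:ℝ) (1/(n+1)) ∧
        p.2 ∈ ball h (1/(n+1)) ∧ φ (x + p.1 • p.2) ≤ 0 := by
      intro n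
      have hpos : (0:ℝ) < 1/(n+1) := by positivity
      have hU : (Set.Ioo (0:ℝ) (1/(n+1))) ×ˢ ball h (1/(n+1)) ∈
          (𝓝[>] (0:ℝ)) ×ˢ 𝓝 h := by
        refine prod_mem_prod ?_ (ball_mem_nhds _ hpos)
        exact Ioo_mem_nhdsGT_of_mem ⟨le_refl _, hpos⟩
      obtain ⟨p, hp1, hp2⟩ := (hfreq.and_eventually (eventually_of_mem hU fun _ hp => hp)).exists
      refine ⟨p, hp2.1, hp2.2, ?_⟩
      rw [hx, sub_zero] at hp1
      by_contra hcon
      push_neg at hcon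
      have : (0:EReal) ≤ (((1:ℝ)/p.1 : ℝ) : EReal) * φ (x + p.1 • p.2) :=
        mul_nonneg (EReal.coe_nonneg.mpr (one_div_pos.mpr hp2.1.1).le) hcon.le
      exact absurd hp1 (not_lt.mpr this)
    choose p hp1 hp2 hp3 using key
    refine ⟨fun n => (p n).2, fun n => (p n).1, ?_, ?_, fun n => (hp1 n).1, ?_⟩
    · rw [tendsto_iff_dist_tendsto_zero]
      exact squeeze_zero (fun n => dist_nonneg) (fun n => (mem_ball.mp (hp2 n)).le)
        tendsto_one_div_add_atTop_nhds_zero_nat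
    · exact squeeze_zero (fun n => (hp1 n).1.le) (fun n => (hp1 n).2.le)
        tendsto_one_div_add_atTop_nhds_zero_nat
    · intro n
      rw [hS]
      exact hp3 n
  · rintro h ⟨vs, ts, hvs, hts, htpos, hmem⟩
    simp only [Set.mem_setOf_eq, hadamardDeriv]
    have htend : Tendsto (fun n => (ts n, vs n)) atTop ((𝓝[>] (0:ℝ)) ×ˢ 𝓝 h) := by
      refine Tendsto.prodMk ?_ hvs
      exact tendsto_nhdsWithin_of_tendsto_nhds_of_eventually_within _ hts
        (Eventually.of_forall htpos)
    calc liminf (fun p : ℝ × X => (((1:ℝ)/p.1 : ℝ) : EReal) * (φ (x + p.1 • p.2) - φ x))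
          ((𝓝[>] (0:ℝ)) ×ˢ 𝓝 h)
        ≤ liminf (fun n : ℕ => (((1:ℝ)/(ts n) : ℝ) : EReal) * (φ (x + ts n • vs n) - φ x))
          atTop := by
          have := liminf_le_liminf_of_le (g := map (fun n => (ts n, vs n)) atTop)
            (f := (𝓝[>] (0:ℝ)) ×ˢ 𝓝 h) htend
            (u := fun p : ℝ × X => (((1:ℝ)/p.1 : ℝ) : EReal) * (φ (x + p.1 • p.2) - φ x))
          rw [← liminf_comp] at this
          exact this
      _ ≤ 0 := by
          refine liminf_le_of_frequently_le (Frequently.of_forall fun n => ?_)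
          rw [hx, sub_zero]
          refine mul_nonpos_of_nonneg_of_nonpos
            (EReal.coe_nonneg.mpr (one_div_pos.mpr (htpos n)).le) ?_
          have := hmem n
          rw [hS] at this
          exact this
end
end

section
/- Let X and Y be Banach spaces, g : X → Y a continuously differentiable mapping, f : Y → ℝ∪{+∞} a proper lower semicontinuous convex function, and x̄ ∈ X with g(x̄) ∈ int(dom f). Set φ := f ∘ g. Then there exists δ > 0 such that for all x ∈ B(x̄, δ) and all h ∈ X, φ'_H(x; h) = d⁺f(g(x); ∇g(x)(h)). -/
open Filter Metric Set Pointwise Topology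
open scoped ENNReal

noncomputable section

/-- Directional derivative of an `EReal`-valued convex function (the limit exists by
convexity, so we express it as a liminf). -/
def dPlus {Y : Type*} [NormedAddCommGroup Y] [NormedSpace ℝ Y] (f : Y → EReal) (y v : Y) :
    EReal :=
  liminf (fun t : ℝ => (((1 : ℝ) / t : ℝ) : EReal) * (f (y + t • v) - f y)) (𝓝[>] (0 : ℝ))

/-!
On the open convex set `int (dom f)` the function `f` is finite and convex. By Baire's theorem one
of the closed sublevel sets `{f ≤ n}` has interior points there, and a convex function bounded
above near one point of an open convex set is locally Lipschitz on it.
Since `g` is continuous, `g x ∈ int (dom f)` for `x` near `x̄`. Writing `g (x + t h') = g x + t q`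
with `q → ∇g(x) h` as `t → 0⁺`, `h' → h` (Fréchet implies Hadamard differentiability), the
Lipschitz bound makes the two difference quotients of `f` differ by at most `K ‖q - ∇g(x) h‖ → 0`,
so their lower limits agree.
-/

open scoped NNReal

theorem LowerSemicontinuous.exists_isOpen_forall_le {Y : Type*} [TopologicalSpace Y]
    [BaireSpace Y] {f : Y → EReal} (hf : LowerSemicontinuous f) {U : Set Y} (hU : IsOpen U)
    (hne : U.Nonempty) (hfin : ∀ y ∈ U, f y ≠ ⊤) :
    ∃ V ⊆ U, IsOpen V ∧ V.Nonempty ∧ ∃ M : ℝ, ∀ y ∈ V, f y ≤ M := by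
  -- `Uᶜ` is added so that the closed sets cover the whole space, as Baire's theorem requires.
  set C : ℕ → Set Y := fun n => f ⁻¹' Iic ((n : ℝ) : EReal) ∪ Uᶜ
  have hclosed : ∀ n, IsClosed (C n) := fun n =>
    (hf.isClosed_preimage _).union hU.isClosed_compl
  have hcover : ⋃ n, C n = univ := by
    refine eq_univ_of_forall fun y => mem_iUnion.2 ?_
    by_cases hy : y ∈ U
    · obtain ⟨r, hr, -⟩ := EReal.lt_iff_exists_real_btwn.1 (lt_top_iff_ne_top.2 (hfin y hy))
      obtain ⟨n, hn⟩ := exists_nat_ge r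
      exact ⟨n, Or.inl (hr.le.trans (EReal.coe_le_coe_iff.2 hn))⟩
    · exact ⟨0, Or.inr hy⟩
  obtain ⟨z, hzU, hz⟩ :=
    (dense_iUnion_interior_of_closed hclosed hcover).inter_open_nonempty U hU hne
  obtain ⟨n, hn⟩ := mem_iUnion.1 hz
  refine ⟨interior (C n) ∩ U, inter_subset_right, isOpen_interior.inter hU, ⟨z, hn, hzU⟩, n, ?_⟩
  rintro y ⟨hyC, hyU⟩
  exact (interior_subset hyC).resolve_right (not_not.2 hyU)

section Epigraph

variable {Y : Type*} [NormedAddCommGroup Y] [NormedSpace ℝ Y] {f : Y → EReal}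

theorem convex_dom_of_convex_epigraph (hf : Convex ℝ (epigraph f)) :
    Convex ℝ {y | f y ≠ ⊤} := by
  have hdom : {y | f y ≠ ⊤} = LinearMap.fst ℝ Y ℝ '' epigraph f := by
    ext y
    refine ⟨fun hy => ?_, ?_⟩
    · obtain ⟨r, hr, -⟩ := EReal.lt_iff_exists_real_btwn.1 (lt_top_iff_ne_top.2 hy)
      exact ⟨(y, r), hr.le, rfl⟩
    · rintro ⟨p, hp, rfl⟩
      exact ne_top_of_le_ne_top (EReal.coe_ne_top p.2) hp
  rw [hdom]
  exact hf.linear_image _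

theorem convexOn_toReal_of_convex_epigraph (hf : Convex ℝ (epigraph f)) {s : Set Y}
    (hs : Convex ℝ s) (hfin : ∀ y ∈ s, f y ≠ ⊤) (hbot : ∀ y ∈ s, f y ≠ ⊥) :
    ConvexOn ℝ s fun y => (f y).toReal := by
  have hcoe : ∀ y ∈ s, f y = (f y).toReal := fun y hy =>
    (EReal.coe_toReal (hfin y hy) (hbot y hy)).symm
  refine ⟨hs, fun p hp q hq a b ha hb hab => ?_⟩
  have hcomb : f (a • p + b • q) ≤ ((a * (f p).toReal + b * (f q).toReal : ℝ) : EReal) :=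
    hf (x := (p, (f p).toReal)) (y := (q, (f q).toReal)) (hcoe p hp).le (hcoe q hq).le ha hb hab
  rw [hcoe _ (hs hp hq ha hb hab)] at hcomb
  exact EReal.coe_le_coe_iff.1 hcomb

theorem locallyLipschitzOn_toReal_interior_dom [CompleteSpace Y] (hlsc : LowerSemicontinuous f)
    (hbot : ∀ y, f y ≠ ⊥) (hconv : Convex ℝ (epigraph f)) :
    LocallyLipschitzOn (interior {y | f y ≠ ⊤}) fun y => (f y).toReal := by
  set D := interior {y | f y ≠ ⊤}
  rcases D.eq_empty_or_nonempty with hD | hD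
  · rw [hD]
    exact locallyLipschitzOn_empty _
  have hfin : ∀ y ∈ D, f y ≠ ⊤ := fun y hy => interior_subset hy
  have hF : ConvexOn ℝ D fun y => (f y).toReal :=
    convexOn_toReal_of_convex_epigraph hconv (convex_dom_of_convex_epigraph hconv).interior hfin
      fun y _ => hbot y
  obtain ⟨V, hVD, hV, ⟨x₀, hx₀⟩, M, hM⟩ := hlsc.exists_isOpen_forall_le isOpen_interior hD hfin
  have hbdd : ∃ x₀ ∈ D, (𝓝 x₀).IsBoundedUnder (· ≤ ·) fun y => (f y).toReal := by
    refine ⟨x₀, hVD hx₀, M, eventually_map.2 ?_⟩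
    filter_upwards [hV.mem_nhds hx₀] with y hy
    simpa using EReal.toReal_le_toReal (hM y hy) (hbot y) (EReal.coe_ne_top M)
  exact ((hF.continuousOn_tfae isOpen_interior hD).out 3 0).1 hbdd

end Epigraph

theorem EReal.liminf_add_of_left_tendsto_zero {α : Type*} {l : Filter α} [l.NeBot]
    {u v : α → EReal} (hu : Tendsto u l (𝓝 0)) : liminf (u + v) l = liminf v l := by
  refine le_antisymm ?_ ?_
  · have hbot : limsup u l ≠ ⊥ := by simp [hu.limsup_eq]
    have htop : limsup u l ≠ ⊤ := by simp [hu.limsup_eq]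
    simpa [hu.limsup_eq] using EReal.liminf_add_le (.inl hbot) (.inl htop)
  · simpa [hu.liminf_eq] using EReal.le_liminf_add (u := u) (v := v) (f := l)

theorem Filter.liminf_comp_fst_prod {α β γ : Type*} [ConditionallyCompleteLattice γ]
    (u : α → γ) (f : Filter α) (g : Filter β) [g.NeBot] :
    liminf (fun p : α × β => u p.1) (f ×ˢ g) = liminf u f :=
  (liminf_comp u Prod.fst _).trans (congrArg _ (map_fst_prod f g))

section Slope

variable {α Y : Type*} [NormedAddCommGroup Y] [NormedSpace ℝ Y] {l : Filter α} {t : α → ℝ}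
  {z : α → Y} {y v : Y}

theorem tendsto_of_tendsto_inv_smul_sub (ht : Tendsto t l (𝓝 0))
    (hz : Tendsto (fun a => (t a)⁻¹ • (z a - y)) l (𝓝 v)) (ht0 : ∀ᶠ a in l, t a ≠ 0) :
    Tendsto z l (𝓝 y) := by
  have hlim : Tendsto (fun a => y + t a • ((t a)⁻¹ • (z a - y))) l (𝓝 (y + (0 : ℝ) • v)) :=
    tendsto_const_nhds.add (ht.smul hz)
  rw [zero_smul, add_zero] at hlim
  refine hlim.congr' ?_
  filter_upwards [ht0] with a ha
  rw [smul_inv_smul₀ ha, add_sub_cancel]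

theorem LipschitzOnWith.tendsto_slope_sub_slope {F : Y → ℝ} {K : ℝ≥0} {s : Set Y}
    (hF : LipschitzOnWith K F s) (ht : ∀ᶠ a in l, 0 < t a)
    (hz : Tendsto (fun a => (t a)⁻¹ • (z a - y)) l (𝓝 v))
    (hs : ∀ᶠ a in l, z a ∈ s ∧ y + t a • v ∈ s) :
    Tendsto (fun a => 1 / t a * (F (z a) - F (y + t a • v))) l (𝓝 0) := by
  have hbound : Tendsto (fun a => (K : ℝ) * ‖(t a)⁻¹ • (z a - y) - v‖) l (𝓝 0) := by
    simpa using ((hz.sub_const v).norm).const_mul (K : ℝ)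
  refine squeeze_zero_norm' ?_ hbound
  filter_upwards [ht, hs] with a hta ⟨hza, hya⟩
  have hdiff : (t a)⁻¹ • (z a - y) - v = (t a)⁻¹ • (z a - (y + t a • v)) := by
    rw [smul_sub, smul_sub, smul_add, inv_smul_smul₀ hta.ne']; abel
  calc ‖1 / t a * (F (z a) - F (y + t a • v))‖
      = (t a)⁻¹ * dist (F (z a)) (F (y + t a • v)) := by
        rw [norm_mul, Real.dist_eq, Real.norm_eq_abs, Real.norm_eq_abs, one_div, abs_inv,
          abs_of_pos hta]
    _ ≤ (t a)⁻¹ * (K * dist (z a) (y + t a • v)) := by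
        gcongr; exact hF.dist_le_mul _ hza _ hya
    _ = K * ‖(t a)⁻¹ • (z a - y) - v‖ := by
        rw [hdiff, norm_smul, Real.norm_eq_abs, abs_inv, abs_of_pos hta, dist_eq_norm]; ring

theorem liminf_slope_eq_of_lipschitzOnWith [l.NeBot] {f : Y → EReal} {F : Y → ℝ} {K : ℝ≥0}
    {s : Set Y} (hs : s ∈ 𝓝 y) (hfF : ∀ w ∈ s, f w = F w) (hF : LipschitzOnWith K F s)
    (ht : Tendsto t l (𝓝[>] 0)) (hz : Tendsto (fun a => (t a)⁻¹ • (z a - y)) l (𝓝 v)) :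
    liminf (fun a => ((1 / t a : ℝ) : EReal) * (f (z a) - f y)) l =
      liminf (fun a => ((1 / t a : ℝ) : EReal) * (f (y + t a • v) - f y)) l := by
  have ht0 : Tendsto t l (𝓝 0) := tendsto_nhds_of_tendsto_nhdsWithin ht
  have htpos : ∀ᶠ a in l, 0 < t a := ht.eventually self_mem_nhdsWithin
  have hyv : Tendsto (fun a => y + t a • v) l (𝓝 y) := by
    simpa using tendsto_const_nhds.add (ht0.smul_const v)
  have hmem : ∀ᶠ a in l, z a ∈ s ∧ y + t a • v ∈ s :=
    ((tendsto_of_tendsto_inv_smul_sub ht0 hz (htpos.mono fun _ h => h.ne')).eventually_mem hs).and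
      (hyv.eventually_mem hs)
  have heq : (fun a => ((1 / t a : ℝ) : EReal) * (f (z a) - f y)) =ᶠ[l]
      (fun a => ((1 / t a * (F (z a) - F (y + t a • v)) : ℝ) : EReal)) +
        fun a => ((1 / t a : ℝ) : EReal) * (f (y + t a • v) - f y) := by
    filter_upwards [hmem] with a ha
    rw [Pi.add_apply, hfF _ ha.1, hfF _ ha.2, hfF _ (mem_of_mem_nhds hs)]
    norm_cast
    ring
  rw [liminf_congr heq, EReal.liminf_add_of_left_tendsto_zero]
  exact (continuous_coe_real_ereal.tendsto 0).comp (hF.tendsto_slope_sub_slope htpos hz hmem)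

end Slope

theorem HasFDerivAt.tendsto_hadamardSlope {X Y : Type*} [NormedAddCommGroup X]
    [NormedSpace ℝ X] [NormedAddCommGroup Y] [NormedSpace ℝ Y] {g : X → Y} {A : X →L[ℝ] Y}
    {x : X} (hg : HasFDerivAt g A x) (h : X) :
    Tendsto (fun p : ℝ × X => p.1⁻¹ • (g (x + p.1 • p.2) - g x)) (𝓝[>] 0 ×ˢ 𝓝 h) (𝓝 (A h)) := by
  have ht : Tendsto (fun p : ℝ × X => p.1) (𝓝[>] 0 ×ˢ 𝓝 h) (𝓝 0) :=
    tendsto_fst.mono_right nhdsWithin_le_nhds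
  refine (hasFDerivWithinAt_univ.2 hg).lim (by simpa using ht.smul tendsto_snd)
    (.of_forall fun _ => mem_univ _) (tendsto_snd.congr' ?_)
  filter_upwards [tendsto_fst.eventually (self_mem_nhdsWithin (s := Ioi (0 : ℝ)))] with p hp
  exact (inv_smul_smul₀ (ne_of_gt hp) p.2).symm

theorem hadamardDeriv_comp_eq_dPlus_general {X Y : Type*}
    [NormedAddCommGroup X] [NormedSpace ℝ X]
    [NormedAddCommGroup Y] [NormedSpace ℝ Y] [CompleteSpace Y]
    (g : X → Y) (hg : ContDiff ℝ 1 g)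
    (f : Y → EReal) (hlsc : LowerSemicontinuous f) (hbot : ∀ y, f y ≠ ⊥)
    (hconv : Convex ℝ (epigraph f))
    (xbar : X) (hdom : g xbar ∈ interior {y | f y ≠ ⊤}) :
    ∃ δ > (0 : ℝ), ∀ x ∈ ball xbar δ, ∀ h : X,
      hadamardDeriv (fun z => f (g z)) x h = dPlus f (g x) (fderiv ℝ g x h) := by
  set D := interior {y | f y ≠ ⊤}
  obtain ⟨δ, hδ, hδD⟩ : ∃ δ > 0, ball xbar δ ⊆ g ⁻¹' D := Metric.mem_nhds_iff.1 <|
    hg.continuous.continuousAt.preimage_mem_nhds (isOpen_interior.mem_nhds hdom)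
  refine ⟨δ, hδ, fun x hx h => ?_⟩
  obtain ⟨K, s, hs, hLip⟩ := locallyLipschitzOn_toReal_interior_dom hlsc hbot hconv (hδD hx)
  rw [isOpen_interior.nhdsWithin_eq (hδD hx)] at hs
  have hfF : ∀ w ∈ s ∩ D, f w = (f w).toReal := fun w hw =>
    (EReal.coe_toReal (interior_subset hw.2) (hbot w)).symm
  have hslope := ((hg.differentiable one_ne_zero) x).hasFDerivAt.tendsto_hadamardSlope h
  calc hadamardDeriv (fun z => f (g z)) x h
      = liminf (fun p : ℝ × X => ((1 / p.1 : ℝ) : EReal) *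
          (f (g x + p.1 • fderiv ℝ g x h) - f (g x))) (𝓝[>] 0 ×ˢ 𝓝 h) :=
        liminf_slope_eq_of_lipschitzOnWith (inter_mem hs (isOpen_interior.mem_nhds (hδD hx)))
          hfF (hLip.mono inter_subset_left) tendsto_fst hslope
    _ = dPlus f (g x) (fderiv ℝ g x h) :=
        liminf_comp_fst_prod
          (fun t => ((1 / t : ℝ) : EReal) * (f (g x + t • fderiv ℝ g x h) - f (g x))) _ _

theorem hadamardDeriv_comp_eq_dPlus {X Y : Type*}
    [NormedAddCommGroup X] [NormedSpace ℝ X] [CompleteSpace X]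
    [NormedAddCommGroup Y] [NormedSpace ℝ Y] [CompleteSpace Y]
    (g : X → Y) (hg : ContDiff ℝ 1 g)
    (f : Y → EReal) (hlsc : LowerSemicontinuous f) (hbot : ∀ y, f y ≠ ⊥)
    (hproper : ∃ y, f y ≠ ⊤) (hconv : Convex ℝ (epigraph f))
    (xbar : X) (hdom : g xbar ∈ interior {y | f y ≠ ⊤}) :
    ∃ δ > (0 : ℝ), ∀ x ∈ ball xbar δ, ∀ h : X,
      hadamardDeriv (fun z => f (g z)) x h = dPlus f (g x) (fderiv ℝ g x h) :=
  hadamardDeriv_comp_eq_dPlus_general g hg f hlsc hbot hconv xbar hdom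
end
end
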